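/- arXiv:2404.04831 — 14 statements merged into one kernel-verified Lean document; each statement's English description precedes it below -/
import Mathlib

section
/- Theorem 1 (first-order condition and uniqueness of the optimal price): If r* ∈ ℝ is a maximizer of g over ℝ, then r* satisfies r* = (1 − F(r*))/f(r*) + Δ/Q. Moreover, if F is twice differentiable and the function r ↦ (1 − F(r))²/f(r) is strictly decreasing on ℝ, then the equation r = (1 − F(r))/f(r) + Δ/Q has at most one solution in ℝ; consequently g has at most one maximizer, and any maximizer of g is the unique solution of this equation. -/
/-- If a function is antitone and has a derivative at a point, the derivative is nonpositive. -/
lemma aux_antitone_deriv_nonpos {G : ℝ → ℝ} {d x : ℝ} (hG : Antitone G)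
    (hd : HasDerivAt G d x) : d ≤ 0 := by
  have ht : Filter.Tendsto (slope G x) (nhdsWithin x (Set.Ioi x)) (nhds d) :=
    (hasDerivAt_iff_tendsto_slope.mp hd).mono_left
      (nhdsWithin_mono x (fun y hy => ne_of_gt hy))
  refine le_of_tendsto ht ?_
  filter_upwards [self_mem_nhdsWithin] with y hy
  have h1 : G y ≤ G x := hG (le_of_lt hy)
  have h2 : (0:ℝ) < y - x := by simp [Set.mem_Ioi] at hy; linarith
  rw [slope_def_field]
  exact div_nonpos_of_nonpos_of_nonneg (by linarith) (by linarith)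

/-- Theorem 1 (first-order condition and uniqueness of the optimal price).
Context: `m₀ > 0`, `Q > 0`, `Δ ∈ ℝ`; `F : ℝ → ℝ` is differentiable, nondecreasing,
with `0 ≤ F r ≤ 1` and derivative `f` satisfying `f r > 0` for all `r`;
`g r = m₀ * (1 - F r) * (r * Q - Δ)`. -/
theorem stmt_0 (m₀ Q Δ : ℝ) (hm₀ : 0 < m₀) (hQ : 0 < Q)
    (F f : ℝ → ℝ) (hF : ∀ r, HasDerivAt F (f r) r) (hFmono : Monotone F)
    (hF0 : ∀ r, 0 ≤ F r) (hF1 : ∀ r, F r ≤ 1) (hf : ∀ r, 0 < f r)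
    (g : ℝ → ℝ) (hg : ∀ r, g r = m₀ * (1 - F r) * (r * Q - Δ)) :
    (∀ rstar : ℝ, IsMaxOn g Set.univ rstar →
      rstar = (1 - F rstar) / f rstar + Δ / Q) ∧
    (∀ f' : ℝ → ℝ, (∀ r, HasDerivAt f (f' r) r) →
      StrictAnti (fun r => (1 - F r) ^ 2 / f r) →
      ((∀ r₁ r₂ : ℝ, r₁ = (1 - F r₁) / f r₁ + Δ / Q →
          r₂ = (1 - F r₂) / f r₂ + Δ / Q → r₁ = r₂) ∧
       (∀ r₁ r₂ : ℝ, IsMaxOn g Set.univ r₁ → IsMaxOn g Set.univ r₂ → r₁ = r₂) ∧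
       (∀ rstar : ℝ, IsMaxOn g Set.univ rstar →
          rstar = (1 - F rstar) / f rstar + Δ / Q))) := by
  have hgfun : g = fun r => m₀ * ((1 - F r) * (r * Q - Δ)) := by
    funext r; rw [hg r]; ring
  -- Part 1: first-order condition
  have part1 : ∀ rstar : ℝ, IsMaxOn g Set.univ rstar →
      rstar = (1 - F rstar) / f rstar + Δ / Q := by
    intro r hmax
    have hd : HasDerivAt g (m₀ * ((-f r) * (r * Q - Δ) + (1 - F r) * Q)) r := by
      rw [hgfun]
      have := (((hF r).const_sub 1).mul
        (((hasDerivAt_id r).mul_const Q).sub_const Δ)).const_mul m₀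
      simpa using this
    have hloc : IsLocalMax g r := hmax.isLocalMax Filter.univ_mem
    have hzero := hloc.hasDerivAt_eq_zero hd
    have hX : (-f r) * (r * Q - Δ) + (1 - F r) * Q = 0 := by
      rcases mul_eq_zero.mp hzero with h | h
      · exact absurd h (ne_of_gt hm₀)
      · exact h
    have hfne : f r ≠ 0 := ne_of_gt (hf r)
    have hQne : Q ≠ 0 := ne_of_gt hQ
    field_simp
    nlinarith [hX]
  refine ⟨part1, ?_⟩
  intro f' hf' hG
  -- the distribution never reaches 1
  have hFlt : ∀ r, F r < 1 := by
    intro r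
    by_contra h
    push_neg at h
    have hmono : StrictMono F := by
      apply strictMono_of_deriv_pos
      intro x
      rw [(hF x).deriv]
      exact hf x
    have : F r < F (r + 1) := hmono (by linarith)
    have := hF1 (r + 1)
    linarith
  -- key uniqueness of the FOC solution
  have key : ∀ r₁ r₂ : ℝ, r₁ = (1 - F r₁) / f r₁ + Δ / Q →
      r₂ = (1 - F r₂) / f r₂ + Δ / Q → r₁ = r₂ := by
    have main : ∀ a b : ℝ, a < b → a = (1 - F a) / f a + Δ / Q →
        b = (1 - F b) / f b + Δ / Q → False := by
      intro a b hab ha hb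
      set c := Δ / Q with hc
      -- h(r) = (1-F r)/f r - (r - c)
      set h : ℝ → ℝ := fun r => (1 - F r) / f r - (r - c) with hhdef
      have hderivh : ∀ r, HasDerivAt h
          (((-f r) * f r - (1 - F r) * f' r) / (f r) ^ 2 - 1) r := by
        intro r
        have h1 : HasDerivAt (fun r => (1 - F r) / f r)
            (((-f r) * f r - (1 - F r) * f' r) / (f r) ^ 2) r :=
          ((hF r).const_sub 1).div (hf' r) (ne_of_gt (hf r))
        have h2 : HasDerivAt (fun r => r - c) (1 : ℝ) r :=
          (hasDerivAt_id r).sub_const c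
        exact h1.sub h2
      -- deriv of G = (1-F)^2/f is nonpositive
      have hGderiv : ∀ r, HasDerivAt (fun r => (1 - F r) ^ 2 / f r)
          (((2 * (1 - F r) ^ 1 * (-f r)) * f r - (1 - F r) ^ 2 * f' r) / (f r) ^ 2) r := by
        intro r
        exact (((hF r).const_sub 1).pow 2).div (hf' r) (ne_of_gt (hf r))
      have hGnonpos : ∀ r,
          ((2 * (1 - F r) ^ 1 * (-f r)) * f r - (1 - F r) ^ 2 * f' r) / (f r) ^ 2 ≤ 0 :=
        fun r => aux_antitone_deriv_nonpos hG.antitone (hGderiv r)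
      -- hence 2 f² + (1-F) f' ≥ 0, so h' ≤ 0
      have hkey : ∀ r, 0 ≤ 2 * (f r) ^ 2 + (1 - F r) * f' r := by
        intro r
        have hfr := hf r
        have hFr := hFlt r
        have h1 := hGnonpos r
        have h2 : (0:ℝ) < (f r) ^ 2 := by positivity
        have h3 : (2 * (1 - F r) ^ 1 * (-f r)) * f r - (1 - F r) ^ 2 * f' r ≤ 0 := by
          by_contra hcon
          push_neg at hcon
          have := div_pos hcon h2
          linarith
        nlinarith [hFr, hfr]
      have hhnonpos : ∀ r, ((-f r) * f r - (1 - F r) * f' r) / (f r) ^ 2 - 1 ≤ 0 := by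
        intro r
        have hfr := hf r
        have h2 : (0:ℝ) < (f r) ^ 2 := by positivity
        have : ((-f r) * f r - (1 - F r) * f' r) / (f r) ^ 2 ≤ 1 := by
          rw [div_le_one h2]
          nlinarith [hkey r]
        linarith
      have hanti : Antitone h := antitone_of_hasDerivAt_nonpos hderivh hhnonpos
      have hha : h a = 0 := by
        simp only [hhdef]
        have : a - c = (1 - F a) / f a := by rw [hc]; linarith [ha]
        rw [this]; ring
      have hhb : h b = 0 := by
        simp only [hhdef]
        have : b - c = (1 - F b) / f b := by rw [hc]; linarith [hb]
        rw [this]; ring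
      have hzeroI : ∀ r ∈ Set.Icc a b, h r = 0 := by
        intro r hr
        have h1 : h r ≤ h a := hanti hr.1
        have h2 : h b ≤ h r := hanti hr.2
        linarith [hha ▸ h1, hhb ▸ h2]
      -- φ(r) = (1-F r)(r - c) is constant on [a,b]
      set φ : ℝ → ℝ := fun r => (1 - F r) * (r - c) with hφdef
      have hφderiv : ∀ r, HasDerivAt φ ((-f r) * (r - c) + (1 - F r) * 1) r := by
        intro r
        exact ((hF r).const_sub 1).mul ((hasDerivAt_id r).sub_const c)
      have hφderiv0 : ∀ r ∈ Set.Icc a b, deriv φ r = 0 := by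
        intro r hr
        rw [(hφderiv r).deriv]
        have h0 := hzeroI r hr
        simp only [hhdef] at h0
        have : (1 - F r) / f r = r - c := by linarith
        have hFr : 1 - F r = (r - c) * f r := (div_eq_iff (ne_of_gt (hf r))).mp this
        rw [hFr]; ring
      have hφdiff : Differentiable ℝ φ := fun r => (hφderiv r).differentiableAt
      have hmono1 : MonotoneOn φ (Set.Icc a b) := by
        apply monotoneOn_of_deriv_nonneg (convex_Icc a b)
          hφdiff.continuous.continuousOn hφdiff.differentiableOn
        intro r hr
        rw [interior_Icc] at hr
        rw [hφderiv0 r (Set.mem_Icc_of_Ioo hr)]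
      have hmono2 : AntitoneOn φ (Set.Icc a b) := by
        apply antitoneOn_of_deriv_nonpos (convex_Icc a b)
          hφdiff.continuous.continuousOn hφdiff.differentiableOn
        intro r hr
        rw [interior_Icc] at hr
        rw [hφderiv0 r (Set.mem_Icc_of_Ioo hr)]
      have haI : a ∈ Set.Icc a b := Set.left_mem_Icc.mpr (le_of_lt hab)
      have hbI : b ∈ Set.Icc a b := Set.right_mem_Icc.mpr (le_of_lt hab)
      have hφeq : φ a = φ b :=
        le_antisymm (hmono1 haI hbI (le_of_lt hab)) (hmono2 haI hbI (le_of_lt hab))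
      -- but G a = φ a and G b = φ b, contradicting strict antitonicity
      have hGa : (1 - F a) ^ 2 / f a = φ a := by
        simp only [hφdef]
        have : a - c = (1 - F a) / f a := by rw [hc]; linarith [ha]
        rw [this, sq, mul_div_assoc]
      have hGb : (1 - F b) ^ 2 / f b = φ b := by
        simp only [hφdef]
        have : b - c = (1 - F b) / f b := by rw [hc]; linarith [hb]
        rw [this, sq, mul_div_assoc]
      have := hG hab
      simp only at this
      rw [hGa, hGb, hφeq] at this
      exact lt_irrefl _ this
    intro r₁ r₂ h₁ h₂
    rcases lt_trichotomy r₁ r₂ with h | h | h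
    · exact absurd (main r₁ r₂ h h₁ h₂) not_false
    · exact h
    · exact absurd (main r₂ r₁ h h₂ h₁) not_false
  exact ⟨key, fun r₁ r₂ h1 h2 => key r₁ r₂ (part1 r₁ h1) (part1 r₂ h2), part1⟩
end

section
/- The function r ↦ (1 − F(r))²/f(r) is nonincreasing on ℝ if and only if the function G(r) = r − (1 − F(r))/f(r) is nondecreasing on ℝ. -/
open Filter Topology

lemma mono_hasDerivAt_nonneg {g : ℝ → ℝ} {y x : ℝ} (hg : Monotone g)
    (h : HasDerivAt g y x) : 0 ≤ y := by
  have ht : Tendsto (slope g x) (𝓝[>] x) (𝓝 y) :=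
    (hasDerivAt_iff_tendsto_slope.1 h).mono_left
      (nhdsWithin_mono x fun z hz => ne_of_gt hz)
  refine ge_of_tendsto ht ?_
  filter_upwards [self_mem_nhdsWithin] with z hz
  have hz' : (0:ℝ) < z - x := sub_pos.2 hz
  have : 0 ≤ (g z - g x) / (z - x) :=
    div_nonneg (sub_nonneg.2 (hg (le_of_lt hz))) hz'.le
  simpa [slope_def_field, div_eq_inv_mul] using this

/-- The function `r ↦ (1 - F r)² / f r` is nonincreasing on ℝ iff
`G r = r - (1 - F r) / f r` is nondecreasing on ℝ.
Context: `F` is twice differentiable (derivative `f`, second derivative `f'`),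
nondecreasing, `0 ≤ F r ≤ 1`, and `f r > 0` for all `r`. -/
theorem stmt_1 (F f f' : ℝ → ℝ)
    (hF : ∀ r, HasDerivAt F (f r) r) (hf : ∀ r, HasDerivAt f (f' r) r)
    (hFmono : Monotone F) (hF0 : ∀ r, 0 ≤ F r) (hF1 : ∀ r, F r ≤ 1)
    (hfpos : ∀ r, 0 < f r) :
    Antitone (fun r => (1 - F r) ^ 2 / f r) ↔
      Monotone (fun r => r - (1 - F r) / f r) := by
  have hfne : ∀ r, f r ≠ 0 := fun r => (hfpos r).ne'
  have hFstrict : StrictMono F :=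
    strictMono_of_deriv_pos (fun r => by rw [(hF r).deriv]; exact hfpos r)
  have hFlt : ∀ r, F r < 1 := fun r => lt_of_lt_of_le (hFstrict (by linarith : r < r + 1)) (hF1 _)
  set g : ℝ → ℝ := fun r => (2 * (f r) ^ 2 + (1 - F r) * f' r) / (f r) ^ 2 with hg'
  have hG : ∀ r, HasDerivAt (fun r => r - (1 - F r) / f r) (g r) r := by
    intro r
    have h1 : HasDerivAt (fun r => (1:ℝ) - F r) (-(f r)) r := (hF r).const_sub 1
    have h2 : HasDerivAt (fun r => (1 - F r) / f r)
        ((-(f r) * f r - (1 - F r) * f' r) / (f r) ^ 2) r := h1.div (hf r) (hfne r)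
    have := (hasDerivAt_id r).sub h2
    refine this.congr_deriv ?_
    have h2' : (f r) ^ 2 ≠ 0 := pow_ne_zero 2 (hfne r)
    rw [one_sub_div h2', div_eq_div_iff h2' h2']
    ring
  have hA : ∀ r, HasDerivAt (fun r => (1 - F r) ^ 2 / f r) (-(1 - F r) * g r) r := by
    intro r
    have h1 : HasDerivAt (fun r => (1:ℝ) - F r) (-(f r)) r := (hF r).const_sub 1
    have h2 : HasDerivAt (fun r => ((1:ℝ) - F r) ^ 2) (2 * (1 - F r) ^ 1 * (-(f r))) r :=
      h1.pow 2
    have h3 := h2.div (hf r) (hfne r)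
    refine h3.congr_deriv ?_
    field_simp [hg']
    ring
  constructor
  · intro hAnti
    have hg_nonneg : ∀ r, 0 ≤ g r := by
      intro r
      have hneg : Monotone (fun r => -((1 - F r) ^ 2 / f r)) := fun a b hab =>
        neg_le_neg (hAnti hab)
      have := mono_hasDerivAt_nonneg hneg (hA r).neg
      have h1F : 0 < 1 - F r := sub_pos.2 (hFlt r)
      nlinarith
    exact monotone_of_deriv_nonneg (fun r => (hG r).differentiableAt)
      (fun r => by rw [(hG r).deriv]; exact hg_nonneg r)
  · intro hMono
    have hg_nonneg : ∀ r, 0 ≤ g r := fun r => mono_hasDerivAt_nonneg hMono (hG r)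
    apply antitone_of_deriv_nonpos (fun r => (hA r).differentiableAt)
    intro r
    rw [(hA r).deriv]
    have h1F : 0 < 1 - F r := sub_pos.2 (hFlt r)
    nlinarith [hg_nonneg r]
end

section
/- Lemma (convexity of expected values of convolutions): For every integer n ≥ 1, E[g(S_{n+1})] − E[g(S_n)] ≥ E[g(S_n)] − E[g(S_{n−1})]; that is, the sequence n ↦ E[g(S_n)] has nondecreasing increments. -/
open MeasureTheory ProbabilityTheory

private lemma conv_slope {g : ℝ → ℝ} (hg : ConvexOn ℝ Set.univ g) {a b t : ℝ}
    (hab : a ≤ b) (ht : 0 ≤ t) : g (a + t) - g a ≤ g (b + t) - g b := by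
  rcases ht.eq_or_lt with rfl | ht'
  · simp
  rcases hab.eq_or_lt with rfl | hab'
  · exact le_refl _
  have h1 : (g (a + t) - g a) / ((a + t) - a) ≤ (g (b + t) - g a) / ((b + t) - a) :=
    hg.secant_mono (Set.mem_univ _) (Set.mem_univ _) (Set.mem_univ _)
      (by intro h; linarith) (by intro h; linarith) (by linarith)
  have h2 : (g a - g (b + t)) / (a - (b + t)) ≤ (g b - g (b + t)) / (b - (b + t)) :=
    hg.secant_mono (Set.mem_univ _) (Set.mem_univ _) (Set.mem_univ _)
      (by intro h; linarith) (by intro h; linarith) hab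
  have e1 : (g a - g (b + t)) / (a - (b + t)) = (g (b + t) - g a) / ((b + t) - a) := by
    rw [← neg_div_neg_eq]; ring_nf
  have e2 : (g b - g (b + t)) / (b - (b + t)) = (g (b + t) - g b) / ((b + t) - b) := by
    rw [← neg_div_neg_eq]; ring_nf
  rw [e1, e2] at h2
  have h3 : (g (a + t) - g a) / t ≤ (g (b + t) - g b) / t := by
    have := h1.trans h2
    simpa using this
  exact (div_le_div_iff_of_pos_right ht').mp h3

private lemma identDistrib_add_right' {Ω : Type*} [MeasurableSpace Ω] {μ : Measure Ω}
    [IsFiniteMeasure μ]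
    {f h h' : Ω → ℝ} (hf : Measurable f) (hh : Measurable h) (hh' : Measurable h')
    (i1 : IndepFun f h μ) (i2 : IndepFun f h' μ) (hid : IdentDistrib h h' μ μ) :
    IdentDistrib (fun ω => f ω + h ω) (fun ω => f ω + h' ω) μ μ := by
  have hp : IdentDistrib (fun ω => (f ω, h ω)) (fun ω => (f ω, h' ω)) μ μ := by
    refine ⟨(hf.prodMk hh).aemeasurable, (hf.prodMk hh').aemeasurable, ?_⟩
    rw [(indepFun_iff_map_prod_eq_prod_map_map hf.aemeasurable hh.aemeasurable).1 i1,
      (indepFun_iff_map_prod_eq_prod_map_map hf.aemeasurable hh'.aemeasurable).1 i2,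
      hid.map_eq]
  exact hp.comp measurable_add

/-- Lemma (convexity of expected values of convolutions): let `(X l)` be i.i.d.
nonnegative real random variables with finite mean and variance (`X l ∈ L²`),
and `S n = X 0 + ⋯ + X (n-1)` the partial sums (`S 0 = 0`). If `g : ℝ → ℝ` is
nondecreasing and convex and `g (S (n-1))`, `g (S n)`, `g (S (n+1))` are
integrable, then for every `n ≥ 1`,
`E[g (S (n+1))] - E[g (S n)] ≥ E[g (S n)] - E[g (S (n-1))]`. -/
theorem stmt_3 {Ω : Type*} [MeasurableSpace Ω] (μ : Measure Ω)
    [IsProbabilityMeasure μ] (X : ℕ → Ω → ℝ)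
    (hmeas : ∀ l, Measurable (X l))
    (hindep : iIndepFun X μ)
    (hident : ∀ l, IdentDistrib (X l) (X 0) μ μ)
    (hnonneg : ∀ l ω, 0 ≤ X l ω)
    (hL2 : ∀ l, MemLp (X l) 2 μ)
    (S : ℕ → Ω → ℝ) (hS : ∀ n ω, S n ω = ∑ l ∈ Finset.range n, X l ω)
    (g : ℝ → ℝ) (hgmono : Monotone g) (hgconv : ConvexOn ℝ Set.univ g)
    (n : ℕ) (hn : 1 ≤ n)
    (hint : ∀ k, k ∈ ({n - 1, n, n + 1} : Set ℕ) →
      Integrable (fun ω => g (S k ω)) μ) :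
    (∫ ω, g (S (n + 1) ω) ∂μ) - ∫ ω, g (S n ω) ∂μ ≥
      (∫ ω, g (S n ω) ∂μ) - ∫ ω, g (S (n - 1) ω) ∂μ := by
  obtain ⟨m, rfl⟩ : ∃ m, n = m + 1 := ⟨n - 1, (Nat.succ_pred_eq_of_pos hn).symm⟩
  have hm1 : m + 1 - 1 = m := rfl
  rw [hm1]
  -- basic facts
  have hgm : Measurable g := hgmono.measurable
  have hSfun : ∀ k, S k = ∑ l ∈ Finset.range k, X l := by
    intro k; funext ω; rw [hS]; simp
  have hmS : ∀ k, Measurable (S k) := by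
    intro k
    have h : S k = fun ω => ∑ l ∈ Finset.range k, X l ω := funext fun ω => hS k ω
    rw [h]
    exact Finset.measurable_sum _ fun l _ => hmeas l
  have hSm1 : ∀ ω, S (m + 1) ω = S m ω + X m ω := by
    intro ω; rw [hS, hS, Finset.sum_range_succ]
  have hSm2 : ∀ ω, S (m + 2) ω = S (m + 1) ω + X (m + 1) ω := by
    intro ω; rw [hS, hS, Finset.sum_range_succ]
  have hSnonneg : ∀ k ω, 0 ≤ S k ω := by
    intro k ω; rw [hS]; exact Finset.sum_nonneg fun l _ => hnonneg l ω
  -- independence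
  have indep1 : IndepFun (S m) (X m) μ := by
    rw [hSfun]; exact hindep.indepFun_finsetSum_of_notMem hmeas Finset.notMem_range_self
  have indep2 : IndepFun (S m) (X (m + 1)) μ := by
    rw [hSfun]
    exact hindep.indepFun_finsetSum_of_notMem hmeas (by simp)
  have identX : IdentDistrib (X m) (X (m + 1)) μ μ := (hident m).trans (hident (m + 1)).symm
  have identS : IdentDistrib (fun ω => S m ω + X m ω) (fun ω => S m ω + X (m + 1) ω) μ μ :=
    identDistrib_add_right' (hmS m) (hmeas m) (hmeas (m + 1)) indep1 indep2 identX
  have identG : IdentDistrib (fun ω => g (S m ω + X m ω)) (fun ω => g (S m ω + X (m + 1) ω)) μ μ :=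
    identS.comp hgm
  -- integrability of the auxiliary function
  have hintn1 : Integrable (fun ω => g (S (m + 2) ω)) μ :=
    hint (m + 2) (by right; right; rfl)
  have hintn : Integrable (fun ω => g (S (m + 1) ω)) μ := hint (m + 1) (by right; left; rfl)
  have hintm : Integrable (fun ω => g (S m ω)) μ := hint m (by left; rfl)
  have haux_le : ∀ ω, g (S m ω + X (m + 1) ω) ≤ g (S (m + 2) ω) := by
    intro ω
    apply hgmono
    rw [hSm2 ω, hSm1 ω]
    have := hnonneg m ω
    linarith
  have haux_ge : ∀ ω, g 0 ≤ g (S m ω + X (m + 1) ω) := by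
    intro ω
    exact hgmono (by have := hSnonneg m ω; have := hnonneg (m + 1) ω; linarith)
  have hauxint : Integrable (fun ω => g (S m ω + X (m + 1) ω)) μ := by
    refine Integrable.mono' ((integrable_const |g 0|).add hintn1.abs)
      ((hgm.comp ((hmS m).add (hmeas (m + 1)))).aestronglyMeasurable) ?_
    filter_upwards with ω
    simp only [Pi.add_apply]
    rw [Real.norm_eq_abs, abs_le]
    constructor
    · have h1 := haux_ge ω
      have h2 : -|g 0| ≤ g 0 := neg_abs_le _
      have h3 : (0:ℝ) ≤ |g (S (m + 2) ω)| := abs_nonneg _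
      linarith
    · have h1 := haux_le ω
      have h2 : g (S (m + 2) ω) ≤ |g (S (m + 2) ω)| := le_abs_self _
      have h3 : (0:ℝ) ≤ |g 0| := abs_nonneg _
      linarith
  -- the key equality of integrals
  have keyeq : (∫ ω, g (S (m + 1) ω) ∂μ) = ∫ ω, g (S m ω + X (m + 1) ω) ∂μ := by
    rw [show (fun ω => g (S (m + 1) ω)) = fun ω => g (S m ω + X m ω) from
      funext fun ω => by rw [hSm1]]
    exact identG.integral_eq
  -- pointwise inequality
  have hpt : ∀ ω, g (S m ω + X (m + 1) ω) - g (S m ω) ≤ g (S (m + 2) ω) - g (S (m + 1) ω) := by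
    intro ω
    have h := conv_slope hgconv (a := S m ω) (b := S (m + 1) ω) (t := X (m + 1) ω)
      (by rw [hSm1]; have := hnonneg m ω; linarith) (hnonneg (m + 1) ω)
    rwa [← hSm2 ω] at h
  have hmono : (∫ ω, (g (S m ω + X (m + 1) ω) - g (S m ω)) ∂μ) ≤
      ∫ ω, (g (S (m + 2) ω) - g (S (m + 1) ω)) ∂μ :=
    integral_mono (hauxint.sub hintm) (hintn1.sub hintn) hpt
  rw [integral_sub hauxint hintm, integral_sub hintn1 hintn] at hmono
  have goal2 : (∫ ω, g (S (m + 1 + 1) ω) ∂μ) = ∫ ω, g (S (m + 2) ω) ∂μ := rfl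
  rw [ge_iff_le, goal2]
  linarith [keyeq, hmono]
end

section
/- For every integer x ≥ 1, E[h((S_{x+1} − C)^+)] − E[h((S_x − C)^+)] ≥ E[h((S_x − C)^+)] − E[h((S_{x−1} − C)^+)]; that is, the expected overbooking penalty x ↦ E[h((S_x − C)^+)] is a discretely convex function of the number x of accepted bookings. -/
open MeasureTheory ProbabilityTheory

lemma convex_increment {g : ℝ → ℝ} (hg : ConvexOn ℝ Set.univ g)
    {a b w : ℝ} (hab : a ≤ b) (hw : 0 ≤ w) :
    g b + g (a + w) ≤ g a + g (b + w) := by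
  rcases eq_or_lt_of_le (show a ≤ b + w by linarith) with h0 | h0
  · have hw0 : w = 0 := by linarith
    have hab' : a = b := by linarith
    subst hw0; subst hab'; simp
  · set t := w / (b + w - a) with ht
    have hd : 0 < b + w - a := by linarith
    have htw : t * (b + w - a) = w := div_mul_cancel₀ w hd.ne'
    have ht0 : 0 ≤ t := div_nonneg hw hd.le
    have ht1 : t ≤ 1 := by rw [ht, div_le_one hd]; linarith
    have e1 : t * a + (1 - t) * (b + w) = b := by linear_combination -htw
    have e2 : (1 - t) * a + t * (b + w) = a + w := by linear_combination htw
    have h1 := hg.2 (Set.mem_univ a) (Set.mem_univ (b + w)) ht0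
      (show (0:ℝ) ≤ 1 - t by linarith) (show t + (1 - t) = 1 by ring)
    have h2 := hg.2 (Set.mem_univ a) (Set.mem_univ (b + w))
      (show (0:ℝ) ≤ 1 - t by linarith) ht0 (show (1 - t) + t = 1 by ring)
    simp only [smul_eq_mul] at h1 h2
    rw [e1] at h1
    rw [e2] at h2
    linarith

/-- Discrete convexity of the expected overbooking penalty: let `(W l)` be
i.i.d. nonnegative real random variables with finite mean and variance
(`W l ∈ L²`), `S x = W 0 + ⋯ + W (x-1)` (`S 0 = 0`), `h : ℝ → ℝ` nondecreasing
convex with `h 0 = 0`, `C ∈ ℝ`, and assume `h ((S x - C)⁺)` is integrable for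
every `x`. Then for every `x ≥ 1`,
`E[h ((S (x+1) - C)⁺)] - E[h ((S x - C)⁺)] ≥
 E[h ((S x - C)⁺)] - E[h ((S (x-1) - C)⁺)]`. -/
theorem stmt_4 {Ω : Type*} [MeasurableSpace Ω] (μ : Measure Ω)
    [IsProbabilityMeasure μ] (W : ℕ → Ω → ℝ)
    (hmeas : ∀ l, Measurable (W l))
    (hindep : iIndepFun W μ)
    (hident : ∀ l, IdentDistrib (W l) (W 0) μ μ)
    (hnonneg : ∀ l ω, 0 ≤ W l ω)
    (hL2 : ∀ l, MemLp (W l) 2 μ)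
    (S : ℕ → Ω → ℝ) (hS : ∀ x ω, S x ω = ∑ l ∈ Finset.range x, W l ω)
    (h : ℝ → ℝ) (hhmono : Monotone h) (hhconv : ConvexOn ℝ Set.univ h)
    (hh0 : h 0 = 0) (C : ℝ)
    (hint : ∀ x : ℕ, Integrable (fun ω => h (max (S x ω - C) 0)) μ)
    (x : ℕ) (hx : 1 ≤ x) :
    (∫ ω, h (max (S (x + 1) ω - C) 0) ∂μ) - ∫ ω, h (max (S x ω - C) 0) ∂μ ≥
      (∫ ω, h (max (S x ω - C) 0) ∂μ) - ∫ ω, h (max (S (x - 1) ω - C) 0) ∂μ := by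
  obtain ⟨n, rfl⟩ : ∃ n, x = n + 1 := ⟨x - 1, (Nat.succ_pred_eq_of_pos hx).symm⟩
  -- the penalty function g
  set g : ℝ → ℝ := fun t => h (max (t - C) 0) with hg
  -- basic properties of g
  have hmaxconv : ConvexOn ℝ Set.univ (fun t : ℝ => max (t - C) 0) := by
    have h1 : ConvexOn ℝ Set.univ (fun t : ℝ => t - C) := by
      refine ⟨convex_univ, fun a _ b _ p q hp hq hpq => ?_⟩
      simp only [smul_eq_mul]
      have : p * (a - C) + q * (b - C) = p * a + q * b - C := by linear_combination (-C) * hpq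
      linarith
    have h2 : ConvexOn ℝ Set.univ (fun _ : ℝ => (0:ℝ)) := convexOn_const 0 convex_univ
    exact h1.sup h2
  have hmaxmono : Monotone (fun t : ℝ => max (t - C) 0) := fun a b hab =>
    max_le_max (by linarith) le_rfl
  have hgconv : ConvexOn ℝ Set.univ g := by
    refine ⟨convex_univ, fun a _ b _ p q hp hq hpq => ?_⟩
    have h1 := hmaxconv.2 (Set.mem_univ a) (Set.mem_univ b) hp hq hpq
    have h2 := hhconv.2 (Set.mem_univ (max (a - C) 0)) (Set.mem_univ (max (b - C) 0)) hp hq hpq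
    simp only [smul_eq_mul] at h1 h2 ⊢
    exact le_trans (hhmono h1) h2
  have hgmono : Monotone g := fun a b hab => hhmono (hmaxmono hab)
  have hgnonneg : ∀ t, 0 ≤ g t := fun t => by
    rw [hg]; simpa [hh0] using hhmono (le_max_right (t - C) 0)
  have hgmeas : Measurable g := hgmono.measurable
  -- measurability of S
  have hSmeas : ∀ y, Measurable (S y) := by
    intro y
    have : S y = fun ω => ∑ l ∈ Finset.range y, W l ω := funext (hS y)
    rw [this]
    exact Finset.measurable_sum _ fun i _ => hmeas i
  -- S is pointwise monotone
  have hSmono : ∀ y ω, S y ω ≤ S (y + 1) ω := by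
    intro y ω
    rw [hS, hS, Finset.sum_range_succ]
    have := hnonneg y ω
    linarith
  -- the common law of the W's
  set ν : Measure ℝ := μ.map (W 0) with hν
  haveI : IsProbabilityMeasure ν := Measure.isProbabilityMeasure_map (hmeas 0).aemeasurable
  have hνnonneg : ∀ᵐ w ∂ν, 0 ≤ w := by
    rw [hν, ae_map_iff (hmeas 0).aemeasurable measurableSet_Ici]
    exact Filter.Eventually.of_forall fun ω => hnonneg 0 ω
  -- the smoothed penalty G
  set G : ℝ → ENNReal := fun s => ∫⁻ w, ENNReal.ofReal (g (s + w)) ∂ν with hG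
  have hGmeas : Measurable G := by
    apply Measurable.lintegral_prod_right
    exact (hgmeas.comp (measurable_fst.add measurable_snd)).ennreal_ofReal
  -- key identity via independence
  have key : ∀ y : ℕ, (∫⁻ ω, ENNReal.ofReal (g (S (y + 1) ω)) ∂μ) = ∫⁻ ω, G (S y ω) ∂μ := by
    intro y
    have hstep : ∀ ω, S (y + 1) ω = S y ω + W y ω := by
      intro ω; rw [hS, hS, Finset.sum_range_succ]
    have hSy : S y = ∑ j ∈ Finset.range y, W j := by
      funext ω; rw [hS]; simp [Finset.sum_apply]
    have hindepSW : IndepFun (S y) (W y) μ := by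
      rw [hSy]
      exact hindep.indepFun_finsetSum_of_notMem hmeas (Finset.notMem_range_self)
    have hmap : μ.map (fun ω => (S y ω, W y ω)) = (μ.map (S y)).prod (μ.map (W y)) :=
      (indepFun_iff_map_prod_eq_prod_map_map (hSmeas y).aemeasurable
        (hmeas y).aemeasurable).mp hindepSW
    have hWy : μ.map (W y) = ν := (hident y).map_eq
    calc (∫⁻ ω, ENNReal.ofReal (g (S (y + 1) ω)) ∂μ)
        = ∫⁻ ω, ENNReal.ofReal (g (S y ω + W y ω)) ∂μ := by
          congr 1; funext ω; rw [hstep]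
      _ = ∫⁻ p : ℝ × ℝ, ENNReal.ofReal (g (p.1 + p.2)) ∂(μ.map (fun ω => (S y ω, W y ω))) :=
          (lintegral_map (f := fun p : ℝ × ℝ => ENNReal.ofReal (g (p.1 + p.2)))
            ((hgmeas.comp (measurable_fst.add measurable_snd)).ennreal_ofReal)
            ((hSmeas y).prodMk (hmeas y))).symm
      _ = ∫⁻ s, ∫⁻ w, ENNReal.ofReal (g (s + w)) ∂(μ.map (W y)) ∂(μ.map (S y)) := by
          rw [hmap]
          haveI : IsProbabilityMeasure (μ.map (W y)) :=
            Measure.isProbabilityMeasure_map (hmeas y).aemeasurable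
          exact lintegral_prod _
            ((hgmeas.comp (measurable_fst.add measurable_snd)).ennreal_ofReal).aemeasurable
      _ = ∫⁻ s, G s ∂(μ.map (S y)) := by rw [hWy]
      _ = ∫⁻ ω, G (S y ω) ∂μ := lintegral_map hGmeas (hSmeas y)
  -- pointwise comparison
  have point : ∀ ω, G (S (n + 1) ω) + ENNReal.ofReal (g (S n ω)) ≥
      G (S n ω) + ENNReal.ofReal (g (S (n + 1) ω)) := by
    intro ω
    set a := S n ω
    set b := S (n + 1) ω
    have hab : a ≤ b := hSmono n ω
    have e1 : G a + ENNReal.ofReal (g b) = ∫⁻ w, (ENNReal.ofReal (g (a + w)) +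
        ENNReal.ofReal (g b)) ∂ν := by
      rw [lintegral_add_right _ measurable_const, lintegral_const, measure_univ, mul_one]
    have e2 : G b + ENNReal.ofReal (g a) = ∫⁻ w, (ENNReal.ofReal (g (b + w)) +
        ENNReal.ofReal (g a)) ∂ν := by
      rw [lintegral_add_right _ measurable_const, lintegral_const, measure_univ, mul_one]
    rw [ge_iff_le, e1, e2]
    refine lintegral_mono_ae ?_
    filter_upwards [hνnonneg] with w hw
    rw [← ENNReal.ofReal_add (hgnonneg _) (hgnonneg _),
      ← ENNReal.ofReal_add (hgnonneg _) (hgnonneg _)]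
    exact ENNReal.ofReal_le_ofReal (by
      have := convex_increment hgconv hab hw
      linarith)
  -- the main ENNReal inequality
  have hmain : (∫⁻ ω, ENNReal.ofReal (g (S (n + 1) ω)) ∂μ) +
      (∫⁻ ω, ENNReal.ofReal (g (S (n + 1) ω)) ∂μ) ≤
      (∫⁻ ω, ENNReal.ofReal (g (S (n + 1 + 1) ω)) ∂μ) +
      ∫⁻ ω, ENNReal.ofReal (g (S n ω)) ∂μ := by
    nth_rewrite 1 [key n]
    rw [key (n + 1)]
    rw [← lintegral_add_left (f := fun ω => G (S n ω)) (hGmeas.comp (hSmeas n)),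
      ← lintegral_add_left (f := fun ω => G (S (n + 1) ω)) (hGmeas.comp (hSmeas (n + 1)))]
    exact lintegral_mono fun ω => point ω
  -- finiteness
  have Lfin : ∀ y, (∫⁻ ω, ENNReal.ofReal (g (S y ω)) ∂μ) ≠ ⊤ := fun y =>
    (Integrable.lintegral_lt_top (hint y)).ne
  -- convert to real integrals
  have int_eq : ∀ y, (∫ ω, h (max (S y ω - C) 0) ∂μ) =
      (∫⁻ ω, ENNReal.ofReal (g (S y ω)) ∂μ).toReal := fun y =>
    integral_eq_lintegral_of_nonneg_ae
      (Filter.Eventually.of_forall fun ω => hgnonneg (S y ω))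
      ((hgmeas.comp (hSmeas y)).aestronglyMeasurable)
  have htr := ENNReal.toReal_mono (ENNReal.add_ne_top.mpr ⟨Lfin _, Lfin _⟩) hmain
  rw [ENNReal.toReal_add (Lfin _) (Lfin _), ENNReal.toReal_add (Lfin _) (Lfin _)] at htr
  rw [ge_iff_le]
  simp only [Nat.add_sub_cancel]
  rw [int_eq, int_eq, int_eq]
  linarith
end

section
/- Proposition 1 (discrete concavity of the PQ value function in the inventory level): For every t ∈ {0,…,T} and every integer x ≥ 1, V^{PQ}_t(x) − V^{PQ}_t(x+1) ≥ V^{PQ}_t(x−1) − V^{PQ}_t(x); that is, for each period t the opportunity cost x ↦ V^{PQ}_t(x) − V^{PQ}_t(x+1) is nondecreasing in the number x of accepted bookings. -/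
open MeasureTheory ProbabilityTheory

lemma four_point {f : ℝ → ℝ} (hf : ConvexOn ℝ Set.univ f)
    (s u v : ℝ) (hu : 0 ≤ u) (hv : 0 ≤ v) :
    f (s + u) + f (s + v) ≤ f s + f (s + u + v) := by
  rcases eq_or_lt_of_le (add_nonneg hu hv) with h | h
  · have hu0 : u = 0 := by linarith
    have hv0 : v = 0 := by linarith
    simp [hu0, hv0]
  · have hw : (0:ℝ) < u + v := h
    have h1 := hf.2 (Set.mem_univ s) (Set.mem_univ (s + (u + v)))
      (show (0:ℝ) ≤ v / (u+v) by positivity) (show (0:ℝ) ≤ u / (u+v) by positivity)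
      (show v / (u+v) + u / (u+v) = 1 by rw [← add_div, add_comm, div_self hw.ne'])
    have h2 := hf.2 (Set.mem_univ s) (Set.mem_univ (s + (u + v)))
      (show (0:ℝ) ≤ u / (u+v) by positivity) (show (0:ℝ) ≤ v / (u+v) by positivity)
      (show u / (u+v) + v / (u+v) = 1 by rw [← add_div, div_self hw.ne'])
    rw [smul_eq_mul, smul_eq_mul, smul_eq_mul, smul_eq_mul] at h1 h2
    have e1 : v / (u+v) * s + u / (u+v) * (s + (u + v)) = s + u := by
      field_simp; ring
    have e2 : u / (u+v) * s + v / (u+v) * (s + (u + v)) = s + v := by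
      field_simp; ring
    rw [e1] at h1
    rw [e2] at h2
    have hsum : v / (u+v) + u / (u+v) = 1 := by rw [← add_div, add_comm, div_self hw.ne']
    have key : f (s + u) + f (s + v) ≤ f s + f (s + (u + v)) := by
      calc f (s + u) + f (s + v) ≤ _ := add_le_add h1 h2
        _ = (v / (u+v) + u / (u+v)) * f s
            + (v / (u+v) + u / (u+v)) * f (s + (u + v)) := by ring
        _ = f s + f (s + (u + v)) := by rw [hsum, one_mul, one_mul]
    have : s + u + v = s + (u + v) := by ring
    rw [this]
    exact key

lemma term_convex {Ω : Type*} [MeasurableSpace Ω] (μ : Measure Ω) [IsProbabilityMeasure μ]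
    (h : ℝ → ℝ) (hmono : Monotone h) (hconv : ConvexOn ℝ Set.univ h) (h0 : h 0 = 0)
    (C : ℝ) (X : ℕ → Ω → ℝ) (hXm : ∀ l, Measurable (X l))
    (hXnn : ∀ l ω, 0 ≤ X l ω)
    (hind : iIndepFun X μ)
    (hid : ∀ l, IdentDistrib (X l) (X 0) μ μ)
    (hint : ∀ x : ℕ, Integrable (fun ω => h (max ((∑ l ∈ Finset.range x, X l ω) - C) 0)) μ)
    (y : ℕ) :
    (∫ ω, h (max ((∑ l ∈ Finset.range (y+1), X l ω) - C) 0) ∂μ) * 2 ≤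
    (∫ ω, h (max ((∑ l ∈ Finset.range (y+2), X l ω) - C) 0) ∂μ) +
    (∫ ω, h (max ((∑ l ∈ Finset.range y, X l ω) - C) 0) ∂μ) := by
  set f : ℝ → ℝ := fun z => h (max (z - C) 0) with hf
  have fmeas : Measurable f :=
    hmono.measurable.comp ((measurable_id.sub_const C).max measurable_const)
  have fmono : Monotone f := fun a c hac =>
    hmono (max_le_max (sub_le_sub_right hac C) le_rfl)
  have fnn : ∀ z, 0 ≤ f z := fun z => by
    have : h 0 ≤ h (max (z - C) 0) := hmono (le_max_right _ _)
    simpa [h0, f] using this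
  have fconv : ConvexOn ℝ Set.univ f := by
    refine ⟨convex_univ, fun a _ c _ p q hp hq hpq => ?_⟩
    simp only [smul_eq_mul, f]
    have key : max ((p * a + q * c) - C) 0 ≤ p * max (a - C) 0 + q * max (c - C) 0 := by
      have h1 : (p * a + q * c) - C ≤ p * max (a - C) 0 + q * max (c - C) 0 := by
        have t1 := mul_le_mul_of_nonneg_left (le_max_left (a - C) 0) hp
        have t2 := mul_le_mul_of_nonneg_left (le_max_left (c - C) 0) hq
        have hC : p * C + q * C = C := by rw [← add_mul, hpq, one_mul]
        nlinarith
      have h2 : (0:ℝ) ≤ p * max (a - C) 0 + q * max (c - C) 0 := by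
        have t1 := mul_le_mul_of_nonneg_left (le_max_right (a - C) 0) hp
        have t2 := mul_le_mul_of_nonneg_left (le_max_right (c - C) 0) hq
        nlinarith
      exact max_le h1 h2
    calc h (max ((p * a + q * c) - C) 0) ≤ h (p * max (a - C) 0 + q * max (c - C) 0) :=
          hmono key
      _ ≤ p * h (max (a - C) 0) + q * h (max (c - C) 0) := by
          have := hconv.2 (Set.mem_univ (max (a - C) 0)) (Set.mem_univ (max (c - C) 0)) hp hq hpq
          simpa using this
  set S : Ω → ℝ := fun ω => ∑ l ∈ Finset.range y, X l ω with hS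
  have Smeas : Measurable S := by
    apply Finset.measurable_sum
    exact fun l _ => hXm l
  -- rewrite sums
  have hsum1 : ∀ ω, (∑ l ∈ Finset.range (y+1), X l ω) = S ω + X y ω := fun ω => by
    rw [Finset.sum_range_succ]
  have hsum2 : ∀ ω, (∑ l ∈ Finset.range (y+2), X l ω) = S ω + X y ω + X (y+1) ω := fun ω => by
    rw [Finset.sum_range_succ, Finset.sum_range_succ]
  -- independence facts
  have indep1 : IndepFun S (X y) μ := by
    have := hind.indepFun_finset_sum_of_notMem hXm (Finset.notMem_range_self (n := y))
    convert this using 1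
    ext ω
    simp [S]
  have indep2 : IndepFun S (X (y+1)) μ := by
    have := hind.indepFun_finset_sum_of_notMem hXm
      (show y + 1 ∉ Finset.range y by simp)
    convert this using 1
    ext ω
    simp [S]
  have idd : IdentDistrib (X (y+1)) (X y) μ μ := (hid (y+1)).trans (hid y).symm
  have mapeq : μ.map (fun ω => (S ω, X (y+1) ω)) = μ.map (fun ω => (S ω, X y ω)) := by
    rw [(indepFun_iff_map_prod_eq_prod_map_map Smeas.aemeasurable
      (hXm (y+1)).aemeasurable).mp indep2,
      (indepFun_iff_map_prod_eq_prod_map_map Smeas.aemeasurable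
      (hXm y).aemeasurable).mp indep1, idd.map_eq]
  have idpair : IdentDistrib (fun ω => (S ω, X (y+1) ω)) (fun ω => (S ω, X y ω)) μ μ :=
    ⟨(Smeas.prodMk (hXm (y+1))).aemeasurable, (Smeas.prodMk (hXm y)).aemeasurable, mapeq⟩
  have idA : IdentDistrib (fun ω => f (S ω + X (y+1) ω)) (fun ω => f (S ω + X y ω)) μ μ :=
    idpair.comp (fmeas.comp (measurable_fst.add measurable_snd))
  have intEq : ∫ ω, f (S ω + X (y+1) ω) ∂μ = ∫ ω, f (S ω + X y ω) ∂μ := idA.integral_eq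
  -- integrability
  have int0 : Integrable (fun ω => f (S ω)) μ := hint y
  have int1 : Integrable (fun ω => f (S ω + X y ω)) μ := by
    have := hint (y+1)
    simpa [f, hsum1] using this
  have int2 : Integrable (fun ω => f (S ω + X y ω + X (y+1) ω)) μ := by
    have := hint (y+2)
    simpa [f, hsum2] using this
  have intA : Integrable (fun ω => f (S ω + X (y+1) ω)) μ := by
    refine Integrable.mono' int2
      ((fmeas.comp (Smeas.add (hXm (y+1)))).aestronglyMeasurable) (ae_of_all _ fun ω => ?_)
    rw [Real.norm_eq_abs, abs_of_nonneg (fnn _)]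
    exact fmono (by linarith [hXnn y ω])
  -- pointwise inequality
  have pw : ∀ ω, f (S ω + X y ω) + f (S ω + X (y+1) ω)
      ≤ f (S ω) + f (S ω + X y ω + X (y+1) ω) :=
    fun ω => four_point fconv (S ω) (X y ω) (X (y+1) ω) (hXnn y ω) (hXnn (y+1) ω)
  have intineq : (∫ ω, f (S ω + X y ω) ∂μ) + (∫ ω, f (S ω + X (y+1) ω) ∂μ)
      ≤ (∫ ω, f (S ω) ∂μ) + (∫ ω, f (S ω + X y ω + X (y+1) ω) ∂μ) := by
    rw [← integral_add int1 intA, ← integral_add int0 int2]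
    exact integral_mono (int1.add intA) (int0.add int2) pw
  rw [intEq] at intineq
  have g1 : (∫ ω, h (max ((∑ l ∈ Finset.range (y+1), X l ω) - C) 0) ∂μ)
      = ∫ ω, f (S ω + X y ω) ∂μ := by
    congr 1; ext ω; rw [hsum1]
  have g2 : (∫ ω, h (max ((∑ l ∈ Finset.range (y+2), X l ω) - C) 0) ∂μ)
      = ∫ ω, f (S ω + X y ω + X (y+1) ω) ∂μ := by
    congr 1; ext ω; rw [hsum2]
  have g0 : (∫ ω, h (max ((∑ l ∈ Finset.range y, X l ω) - C) 0) ∂μ)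
      = ∫ ω, f (S ω) ∂μ := rfl
  rw [g0, g1, g2]
  linarith

/-- Proposition 1 (discrete concavity of the PQ value function in the
inventory level): in the quantity-based (PQ) model, for every period
`t ∈ {0,…,T}` and every number of accepted bookings `x ≥ 1`,
`VPQ t x - VPQ t (x+1) ≥ VPQ t (x-1) - VPQ t x`; i.e. the opportunity cost
is nondecreasing in `x`. -/
theorem stmt_5
    {Ω : Type*} [MeasurableSpace Ω] (μ : Measure Ω) [IsProbabilityMeasure μ]
    (T m : ℕ) (hT : 1 ≤ T) (hm : 1 ≤ m)
    -- arrival probabilities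
    (marr : ℕ → Fin m → ℝ) (hmarr : ∀ t i, 0 ≤ marr t i)
    (hmsum : ∀ t, t < T → ∑ i, marr t i ≤ 1)
    -- reservation-price distribution functions
    (F : ℕ → Fin m → ℝ → ℝ) (hFmono : ∀ t i, Monotone (F t i))
    (hF0 : ∀ t i r, 0 ≤ F t i r) (hF1 : ∀ t i r, F t i r ≤ 1)
    (b : ℕ → Fin m → ℝ → ℝ) (hb : ∀ t i r, b t i r = marr t i * (1 - F t i r))
    -- expected chargeable weights
    (Q : Fin m → ℝ) (hQ : ∀ i, 0 < Q i)
    -- penalty functions and capacities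
    (hw hv : ℝ → ℝ) (hwmono : Monotone hw) (hvmono : Monotone hv)
    (hwconv : ConvexOn ℝ Set.univ hw) (hvconv : ConvexOn ℝ Set.univ hv)
    (hw0 : hw 0 = 0) (hv0 : hv 0 = 0)
    (Cw Cv : ℝ) (hCw : 0 < Cw) (hCv : 0 < Cv)
    -- i.i.d. weight-volume pairs, nonnegative, with finite means and variances
    (W V : ℕ → Ω → ℝ)
    (hWVmeas : ∀ l, Measurable (fun ω => (W l ω, V l ω)))
    (hindep : iIndepFun (fun l ω => (W l ω, V l ω)) μ)
    (hident : ∀ l, IdentDistrib (fun ω => (W l ω, V l ω))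
      (fun ω => (W 0 ω, V 0 ω)) μ μ)
    (hWnonneg : ∀ l ω, 0 ≤ W l ω) (hVnonneg : ∀ l ω, 0 ≤ V l ω)
    (hWL2 : ∀ l, MemLp (W l) 2 μ) (hVL2 : ∀ l, MemLp (V l) 2 μ)
    (hintW : ∀ x : ℕ, Integrable
      (fun ω => hw (max ((∑ l ∈ Finset.range x, W l ω) - Cw) 0)) μ)
    (hintV : ∀ x : ℕ, Integrable
      (fun ω => hv (max ((∑ l ∈ Finset.range x, V l ω) - Cv) 0)) μ)
    -- the PQ value function: boundary condition and Bellman equation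
    (VPQ : ℕ → ℕ → ℝ)
    (hbdd : ∀ t, t < T → ∀ x : ℕ, ∀ i, BddAbove (Set.range fun r : ℝ =>
      b t i r * (r * Q i - (VPQ (t + 1) x - VPQ (t + 1) (x + 1)))))
    (hboundary : ∀ x : ℕ, VPQ T x =
      -(∫ ω, hw (max ((∑ l ∈ Finset.range x, W l ω) - Cw) 0) ∂μ)
      - ∫ ω, hv (max ((∑ l ∈ Finset.range x, V l ω) - Cv) 0) ∂μ)
    (hbellman : ∀ t, t < T → ∀ x : ℕ, VPQ t x =
      (∑ i, ⨆ r : ℝ, b t i r * (r * Q i - (VPQ (t + 1) x - VPQ (t + 1) (x + 1))))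
      + VPQ (t + 1) x) :
    ∀ t, t ≤ T → ∀ x : ℕ, 1 ≤ x →
      VPQ t x - VPQ t (x + 1) ≥ VPQ t (x - 1) - VPQ t x := by
  -- marginal facts for W and V
  have hWmeas : ∀ l, Measurable (W l) := fun l => measurable_fst.comp (hWVmeas l)
  have hVmeas : ∀ l, Measurable (V l) := fun l => measurable_snd.comp (hWVmeas l)
  have hWind : iIndepFun W μ :=
    hindep.comp (fun _ => Prod.fst) (fun _ => measurable_fst)
  have hVind : iIndepFun V μ :=
    hindep.comp (fun _ => Prod.snd) (fun _ => measurable_snd)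
  have hWid : ∀ l, IdentDistrib (W l) (W 0) μ μ := fun l =>
    (hident l).comp measurable_fst
  have hVid : ∀ l, IdentDistrib (V l) (V 0) μ μ := fun l =>
    (hident l).comp measurable_snd
  -- backward induction
  suffices H : ∀ k t, t + k = T → ∀ x : ℕ, 1 ≤ x →
      VPQ t x - VPQ t (x + 1) ≥ VPQ t (x - 1) - VPQ t x by
    intro t ht x hx
    exact H (T - t) t (by omega) x hx
  intro k
  induction k with
  | zero =>
    intro t ht x hx
    have hteq : t = T := by omega
    subst hteq
    obtain ⟨y, rfl⟩ : ∃ y, x = y + 1 := ⟨x - 1, by omega⟩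
    have hW := term_convex μ hw hwmono hwconv hw0 Cw W hWmeas hWnonneg hWind hWid hintW y
    have hV := term_convex μ hv hvmono hvconv hv0 Cv V hVmeas hVnonneg hVind hVid hintV y
    have e0 := hboundary y
    have e1 := hboundary (y + 1)
    have e2 := hboundary (y + 2)
    have hxm : y + 1 - 1 = y := by omega
    rw [hxm]
    have : y + 1 + 1 = y + 2 := by omega
    rw [this, e0, e1, e2]
    linarith
  | succ k ih =>
    intro t ht x hx
    have htT : t < T := by omega
    have ih' := ih (t + 1) (by omega)
    obtain ⟨y, rfl⟩ : ∃ y, x = y + 1 := ⟨x - 1, by omega⟩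
    have hxm : y + 1 - 1 = y := by omega
    rw [hxm]
    -- Δ values at t+1
    set d0 := VPQ (t + 1) y - VPQ (t + 1) (y + 1) with hd0
    set d1 := VPQ (t + 1) (y + 1) - VPQ (t + 1) (y + 1 + 1) with hd1
    set d2 := VPQ (t + 1) (y + 2) - VPQ (t + 1) (y + 2 + 1) with hd2
    have hd01 : d0 ≤ d1 := by
      have h := ih' (y + 1) (by omega)
      simp only [Nat.add_sub_cancel] at h
      rw [hd0, hd1]
      linarith
    have hd12 : d1 ≤ d2 := by
      have h := ih' (y + 2) (by omega)
      have h21 : y + 2 - 1 = y + 1 := by omega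
      rw [h21] at h
      rw [hd1, hd2]
      have hyy : y + 1 + 1 = y + 2 := by omega
      rw [hyy]
      linarith
    have bnn : ∀ i r, 0 ≤ b t i r := fun i r => by
      rw [hb]
      exact mul_nonneg (hmarr t i) (by linarith [hF1 t i r])
    have ble : ∀ i r, b t i r ≤ marr t i := fun i r => by
      rw [hb]
      calc marr t i * (1 - F t i r) ≤ marr t i * 1 :=
            mul_le_mul_of_nonneg_left (by linarith [hF0 t i r]) (hmarr t i)
        _ = marr t i := mul_one _
    -- sup facts
    have fact1 : ∀ i : Fin m,
        (⨆ r : ℝ, b t i r * (r * Q i - d2)) ≤ ⨆ r : ℝ, b t i r * (r * Q i - d1) := by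
      intro i
      apply ciSup_mono (hbdd t htT (y + 1) i)
      intro r
      exact mul_le_mul_of_nonneg_left (by linarith) (bnn i r)
    have fact2 : ∀ i : Fin m,
        (⨆ r : ℝ, b t i r * (r * Q i - d0)) ≤
          (⨆ r : ℝ, b t i r * (r * Q i - d1)) + marr t i * (d1 - d0) := by
      intro i
      apply ciSup_le
      intro r
      have key : b t i r * (r * Q i - d0) =
          b t i r * (r * Q i - d1) + b t i r * (d1 - d0) := by ring
      rw [key]
      have l1 : b t i r * (r * Q i - d1) ≤ ⨆ r : ℝ, b t i r * (r * Q i - d1) :=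
        le_ciSup (hbdd t htT (y + 1) i) r
      have l2 : b t i r * (d1 - d0) ≤ marr t i * (d1 - d0) :=
        mul_le_mul_of_nonneg_right (ble i r) (by linarith)
      linarith
    have hA : (∑ i, ⨆ r : ℝ, b t i r * (r * Q i - d2)) ≤
        ∑ i, ⨆ r : ℝ, b t i r * (r * Q i - d1) :=
      Finset.sum_le_sum fun i _ => fact1 i
    have hB : (∑ i, ⨆ r : ℝ, b t i r * (r * Q i - d0)) ≤
        (∑ i, ⨆ r : ℝ, b t i r * (r * Q i - d1)) + (∑ i, marr t i) * (d1 - d0) := by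
      calc (∑ i, ⨆ r : ℝ, b t i r * (r * Q i - d0)) ≤
          ∑ i, ((⨆ r : ℝ, b t i r * (r * Q i - d1)) + marr t i * (d1 - d0)) :=
            Finset.sum_le_sum fun i _ => fact2 i
        _ = (∑ i, ⨆ r : ℝ, b t i r * (r * Q i - d1)) + (∑ i, marr t i) * (d1 - d0) := by
            rw [Finset.sum_add_distrib, Finset.sum_mul]
    have hC : (∑ i, marr t i) * (d1 - d0) ≤ d1 - d0 :=
      mul_le_of_le_one_left (by linarith) (hmsum t htT)
    have e0 := hbellman t htT y
    have e1 := hbellman t htT (y + 1)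
    have e2 := hbellman t htT (y + 2)
    rw [← hd0] at e0
    rw [← hd1] at e1
    rw [← hd2] at e2
    have hx2 : y + 1 + 1 = y + 2 := by omega
    rw [ge_iff_le, hx2, e0, e1, e2]
    have hd1' : VPQ (t + 1) (y + 1) - VPQ (t + 1) (y + 2) = d1 := by
      rw [hd1]
    have hd0' : VPQ (t + 1) y - VPQ (t + 1) (y + 1) = d0 := rfl
    linarith [hA, hB, hC, hd01]
end

section
/- Proposition 2 (monotonicity of the PQ opportunity cost in time): For every t ∈ {0,…,T−1} and every x ∈ ℕ, V^{PQ}_t(x) − V^{PQ}_t(x+1) ≥ V^{PQ}_{t+1}(x) − V^{PQ}_{t+1}(x+1). -/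
open MeasureTheory ProbabilityTheory
open MeasureTheory ProbabilityTheory

lemma convex_four {f : ℝ → ℝ} (hf : ConvexOn ℝ Set.univ f) {a b c d : ℝ}
    (hca : c ≤ a) (hda : d ≤ a) (hbc : b ≤ c) (hsum : c + d = a + b) :
    f c + f d ≤ f a + f b := by
  rcases eq_or_lt_of_le (hbc.trans hca) with h | h
  · have hc : c = a := le_antisymm hca (h ▸ hbc)
    have hd : d = b := by linarith
    rw [hc, hd]
  · set lam : ℝ := (c - b) / (a - b) with hlam
    have hab : (0:ℝ) < a - b := by linarith
    have h0 : 0 ≤ lam := div_nonneg (by linarith) hab.le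
    have h1 : lam ≤ 1 := by rw [hlam, div_le_one hab]; linarith
    have hkey : lam * (a - b) = c - b := div_mul_cancel₀ _ hab.ne'
    have hc : lam * a + (1 - lam) * b = c := by nlinarith
    have hd : (1 - lam) * a + lam * b = d := by nlinarith
    have H1 := hf.2 (Set.mem_univ a) (Set.mem_univ b) h0
      (show (0:ℝ) ≤ 1 - lam by linarith) (show lam + (1 - lam) = 1 by ring)
    have H2 := hf.2 (Set.mem_univ a) (Set.mem_univ b)
      (show (0:ℝ) ≤ 1 - lam by linarith) h0 (show (1 - lam) + lam = 1 by ring)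
    simp only [smul_eq_mul] at H1 H2
    rw [hc] at H1; rw [hd] at H2
    linarith

lemma convexOn_comp_max (h : ℝ → ℝ) (hconv : ConvexOn ℝ Set.univ h) (hmono : Monotone h)
    (C : ℝ) : ConvexOn ℝ Set.univ (fun s => h (max (s - C) 0)) := by
  have hp : ConvexOn ℝ Set.univ (fun s : ℝ => max (s - C) 0) := by
    refine ⟨convex_univ, fun x _ y _ p q hp hq hpq => ?_⟩
    simp only [smul_eq_mul]
    refine max_le ?_ (by positivity)
    calc p * x + q * y - C = p * (x - C) + q * (y - C) := by linear_combination C * hpq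
      _ ≤ p * max (x - C) 0 + q * max (y - C) 0 := by
          gcongr <;> exact le_max_left _ _
  refine ⟨convex_univ, fun x _ y _ p q hp' hq' hpq => ?_⟩
  calc h (max ((p • x + q • y) - C) 0)
      ≤ h (p • max (x - C) 0 + q • max (y - C) 0) :=
        hmono (hp.2 (Set.mem_univ x) (Set.mem_univ y) hp' hq' hpq)
    _ ≤ p • h (max (x - C) 0) + q • h (max (y - C) 0) :=
        hconv.2 (Set.mem_univ _) (Set.mem_univ _) hp' hq' hpq

lemma exp_convex_step {Ω : Type*} [MeasurableSpace Ω] (μ : Measure Ω) [IsProbabilityMeasure μ]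
    (X : ℕ → Ω → ℝ) (hmeas : ∀ l, Measurable (X l))
    (hindep : iIndepFun X μ)
    (hident : ∀ l, IdentDistrib (X l) (X 0) μ μ)
    (hnonneg : ∀ l ω, 0 ≤ X l ω)
    (f : ℝ → ℝ) (hconv : ConvexOn ℝ Set.univ f) (hmono : Monotone f)
    (hint : ∀ x : ℕ, Integrable (fun ω => f (∑ l ∈ Finset.range x, X l ω)) μ)
    (x : ℕ) :
    (∫ ω, f (∑ l ∈ Finset.range (x+1), X l ω) ∂μ) - ∫ ω, f (∑ l ∈ Finset.range x, X l ω) ∂μ ≤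
    (∫ ω, f (∑ l ∈ Finset.range (x+2), X l ω) ∂μ)
      - ∫ ω, f (∑ l ∈ Finset.range (x+1), X l ω) ∂μ := by
  set S : Ω → ℝ := fun ω => ∑ l ∈ Finset.range x, X l ω with hS
  have hSmeas : Measurable S := Finset.measurable_sum _ fun l _ => hmeas l
  have hfmeas : Measurable f := hmono.measurable
  -- independence of S and X j for j ≥ x
  have hindS : ∀ j, x ≤ j → IndepFun S (X j) μ := by
    intro j hj
    have h := hindep.indepFun_finsetSum_of_notMem hmeas
      (s := Finset.range x) (i := j) (by simp; omega)
    have hEq : (∑ l ∈ Finset.range x, X l) = S := by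
      funext ω; simp [hS, Finset.sum_apply]
    rwa [hEq] at h
  have hmap : ∀ j, x ≤ j → Measure.map (fun ω => (S ω, X j ω)) μ
      = (μ.map S).prod (μ.map (X j)) := fun j hj =>
    (indepFun_iff_map_prod_eq_prod_map_map hSmeas.aemeasurable
      (hmeas j).aemeasurable).mp (hindS j hj)
  have hXmap : μ.map (X x) = μ.map (X (x+1)) :=
    ((hident x).trans (hident (x+1)).symm).map_eq
  have hID : IdentDistrib (fun ω => (S ω, X x ω)) (fun ω => (S ω, X (x+1) ω)) μ μ := by
    refine ⟨(hSmeas.prodMk (hmeas x)).aemeasurable,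
      (hSmeas.prodMk (hmeas (x+1))).aemeasurable, ?_⟩
    rw [hmap x le_rfl, hmap (x+1) (by omega), hXmap]
  have hID2 : IdentDistrib (fun ω => f (S ω + X x ω)) (fun ω => f (S ω + X (x+1) ω)) μ μ :=
    hID.comp (hfmeas.comp (measurable_fst.add measurable_snd))
  -- rewrite the three integrals in terms of S
  have e1 : ∀ ω, ∑ l ∈ Finset.range (x+1), X l ω = S ω + X x ω := by
    intro ω; rw [Finset.sum_range_succ]
  have e2 : ∀ ω, ∑ l ∈ Finset.range (x+2), X l ω = S ω + X x ω + X (x+1) ω := by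
    intro ω; rw [Finset.sum_range_succ, Finset.sum_range_succ]
  have I1 : Integrable (fun ω => f (S ω)) μ := hint x
  have I2 : Integrable (fun ω => f (S ω + X x ω)) μ := by
    have := hint (x+1); simpa only [e1] using this
  have I3 : Integrable (fun ω => f (S ω + X x ω + X (x+1) ω)) μ := by
    have := hint (x+2); simpa only [e2] using this
  have I4 : Integrable (fun ω => f (S ω + X (x+1) ω)) μ := hID2.integrable_iff.mp I2
  have hptw : ∀ ω, f (S ω + X x ω) + f (S ω + X (x+1) ω)
      ≤ f (S ω + X x ω + X (x+1) ω) + f (S ω) := by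
    intro ω
    exact convex_four hconv (by linarith [hnonneg (x+1) ω]) (by linarith [hnonneg x ω])
      (by linarith [hnonneg x ω]) (by ring)
  have hInt : ∫ ω, f (S ω + X x ω) ∂μ + ∫ ω, f (S ω + X (x+1) ω) ∂μ
      ≤ ∫ ω, f (S ω + X x ω + X (x+1) ω) ∂μ + ∫ ω, f (S ω) ∂μ := by
    rw [← integral_add I2 I4, ← integral_add I3 I1]
    exact integral_mono (I2.add I4) (I3.add I1) hptw
  have hEqInt : ∫ ω, f (S ω + X x ω) ∂μ = ∫ ω, f (S ω + X (x+1) ω) ∂μ := hID2.integral_eq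
  simp only [e1, e2]
  linarith


/-- Proposition 2 (monotonicity of the PQ opportunity cost in time): in the
quantity-based (PQ) model, for every `t ∈ {0,…,T-1}` and every `x ∈ ℕ`,
`VPQ t x - VPQ t (x+1) ≥ VPQ (t+1) x - VPQ (t+1) (x+1)`. -/
theorem stmt_6
    {Ω : Type*} [MeasurableSpace Ω] (μ : Measure Ω) [IsProbabilityMeasure μ]
    (T m : ℕ) (hT : 1 ≤ T) (hm : 1 ≤ m)
    -- arrival probabilities
    (marr : ℕ → Fin m → ℝ) (hmarr : ∀ t i, 0 ≤ marr t i)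
    (hmsum : ∀ t, t < T → ∑ i, marr t i ≤ 1)
    -- reservation-price distribution functions
    (F : ℕ → Fin m → ℝ → ℝ) (hFmono : ∀ t i, Monotone (F t i))
    (hF0 : ∀ t i r, 0 ≤ F t i r) (hF1 : ∀ t i r, F t i r ≤ 1)
    (b : ℕ → Fin m → ℝ → ℝ) (hb : ∀ t i r, b t i r = marr t i * (1 - F t i r))
    -- expected chargeable weights
    (Q : Fin m → ℝ) (hQ : ∀ i, 0 < Q i)
    -- penalty functions and capacities
    (hw hv : ℝ → ℝ) (hwmono : Monotone hw) (hvmono : Monotone hv)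
    (hwconv : ConvexOn ℝ Set.univ hw) (hvconv : ConvexOn ℝ Set.univ hv)
    (hw0 : hw 0 = 0) (hv0 : hv 0 = 0)
    (Cw Cv : ℝ) (hCw : 0 < Cw) (hCv : 0 < Cv)
    -- i.i.d. weight-volume pairs, nonnegative, with finite means and variances
    (W V : ℕ → Ω → ℝ)
    (hWVmeas : ∀ l, Measurable (fun ω => (W l ω, V l ω)))
    (hindep : iIndepFun (fun l ω => (W l ω, V l ω)) μ)
    (hident : ∀ l, IdentDistrib (fun ω => (W l ω, V l ω))
      (fun ω => (W 0 ω, V 0 ω)) μ μ)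
    (hWnonneg : ∀ l ω, 0 ≤ W l ω) (hVnonneg : ∀ l ω, 0 ≤ V l ω)
    (hWL2 : ∀ l, MemLp (W l) 2 μ) (hVL2 : ∀ l, MemLp (V l) 2 μ)
    (hintW : ∀ x : ℕ, Integrable
      (fun ω => hw (max ((∑ l ∈ Finset.range x, W l ω) - Cw) 0)) μ)
    (hintV : ∀ x : ℕ, Integrable
      (fun ω => hv (max ((∑ l ∈ Finset.range x, V l ω) - Cv) 0)) μ)
    -- the PQ value function: boundary condition and Bellman equation
    (VPQ : ℕ → ℕ → ℝ)
    (hbdd : ∀ t, t < T → ∀ x : ℕ, ∀ i, BddAbove (Set.range fun r : ℝ =>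
      b t i r * (r * Q i - (VPQ (t + 1) x - VPQ (t + 1) (x + 1)))))
    (hboundary : ∀ x : ℕ, VPQ T x =
      -(∫ ω, hw (max ((∑ l ∈ Finset.range x, W l ω) - Cw) 0) ∂μ)
      - ∫ ω, hv (max ((∑ l ∈ Finset.range x, V l ω) - Cv) 0) ∂μ)
    (hbellman : ∀ t, t < T → ∀ x : ℕ, VPQ t x =
      (∑ i, ⨆ r : ℝ, b t i r * (r * Q i - (VPQ (t + 1) x - VPQ (t + 1) (x + 1))))
      + VPQ (t + 1) x) :
    ∀ t, t < T → ∀ x : ℕ,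
      VPQ t x - VPQ t (x + 1) ≥ VPQ (t + 1) x - VPQ (t + 1) (x + 1) := by
  -- basic bounds on b
  have hb0 : ∀ t i r, 0 ≤ b t i r := fun t i r => by
    rw [hb]; exact mul_nonneg (hmarr t i) (by linarith [hF1 t i r])
  have hble : ∀ t i r, b t i r ≤ marr t i := fun t i r => by
    rw [hb]; nlinarith [hmarr t i, hF0 t i r]
  -- antitonicity of the supremum in the opportunity cost
  have fact1 : ∀ t, t < T → ∀ (i : Fin m) (x y : ℕ),
      (VPQ (t+1) x - VPQ (t+1) (x+1)) ≤ (VPQ (t+1) y - VPQ (t+1) (y+1)) →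
      (⨆ r : ℝ, b t i r * (r * Q i - (VPQ (t+1) y - VPQ (t+1) (y+1)))) ≤
      (⨆ r : ℝ, b t i r * (r * Q i - (VPQ (t+1) x - VPQ (t+1) (x+1)))) := by
    intro t ht i x y hxy
    refine ciSup_mono (hbdd t ht x i) fun r => ?_
    exact mul_le_mul_of_nonneg_left (by linarith) (hb0 t i r)
  -- Lipschitz bound for the supremum
  have fact2 : ∀ t, t < T → ∀ (i : Fin m) (x y : ℕ),
      (VPQ (t+1) x - VPQ (t+1) (x+1)) ≤ (VPQ (t+1) y - VPQ (t+1) (y+1)) →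
      (⨆ r : ℝ, b t i r * (r * Q i - (VPQ (t+1) x - VPQ (t+1) (x+1)))) ≤
      (⨆ r : ℝ, b t i r * (r * Q i - (VPQ (t+1) y - VPQ (t+1) (y+1))))
        + marr t i * ((VPQ (t+1) y - VPQ (t+1) (y+1)) - (VPQ (t+1) x - VPQ (t+1) (x+1))) := by
    intro t ht i x y hxy
    refine ciSup_le fun r => ?_
    have h1 : b t i r * (r * Q i - (VPQ (t+1) y - VPQ (t+1) (y+1)))
        ≤ ⨆ r : ℝ, b t i r * (r * Q i - (VPQ (t+1) y - VPQ (t+1) (y+1))) :=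
      le_ciSup (hbdd t ht y i) r
    have h2 : b t i r * ((VPQ (t+1) y - VPQ (t+1) (y+1)) - (VPQ (t+1) x - VPQ (t+1) (x+1)))
        ≤ marr t i * ((VPQ (t+1) y - VPQ (t+1) (y+1)) - (VPQ (t+1) x - VPQ (t+1) (x+1))) :=
      mul_le_mul_of_nonneg_right (hble t i r) (by linarith)
    nlinarith [hb0 t i r]
  -- concavity of VPQ t in x (Proposition 1), by backward induction
  have hWmeas : ∀ l, Measurable (W l) := fun l => (measurable_fst.comp (hWVmeas l) : _)
  have hVmeas : ∀ l, Measurable (V l) := fun l => (measurable_snd.comp (hWVmeas l) : _)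
  have hWindep : iIndepFun W μ := by
    have := hindep.comp (fun _ => (Prod.fst : ℝ × ℝ → ℝ)) (fun _ => measurable_fst)
    exact this
  have hVindep : iIndepFun V μ := by
    have := hindep.comp (fun _ => (Prod.snd : ℝ × ℝ → ℝ)) (fun _ => measurable_snd)
    exact this
  have hWident : ∀ l, IdentDistrib (W l) (W 0) μ μ := fun l =>
    (hident l).comp measurable_fst
  have hVident : ∀ l, IdentDistrib (V l) (V 0) μ μ := fun l =>
    (hident l).comp measurable_snd
  have hconcW := exp_convex_step μ W hWmeas hWindep hWident hWnonneg
    (fun s => hw (max (s - Cw) 0)) (convexOn_comp_max hw hwconv hwmono Cw)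
    (hwmono.comp fun s s' hss' => max_le_max (by linarith) le_rfl) hintW
  have hconcV := exp_convex_step μ V hVmeas hVindep hVident hVnonneg
    (fun s => hv (max (s - Cv) 0)) (convexOn_comp_max hv hvconv hvmono Cv)
    (hvmono.comp fun s s' hss' => max_le_max (by linarith) le_rfl) hintV
  have conc : ∀ k t, t + k = T → ∀ x : ℕ,
      VPQ t x - VPQ t (x+1) ≤ VPQ t (x+1) - VPQ t (x+2) := by
    intro k
    induction k with
    | zero =>
      intro t ht x
      have htT : t = T := by omega
      subst htT
      have h1 := hconcW x
      have h2 := hconcV x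
      rw [hboundary x, hboundary (x+1), hboundary (x+2)]
      have e : x + 1 + 1 = x + 2 := rfl
      linarith
    | succ k ih =>
      intro t ht x
      have htT : t < T := by omega
      have ih' := ih (t+1) (by omega)
      -- a ≤ b' ≤ c
      have hab : VPQ (t+1) x - VPQ (t+1) (x+1) ≤ VPQ (t+1) (x+1) - VPQ (t+1) (x+2) := ih' x
      have hbc : VPQ (t+1) (x+1) - VPQ (t+1) (x+2) ≤ VPQ (t+1) (x+2) - VPQ (t+1) (x+3) :=
        ih' (x+1)
      rw [hbellman t htT x, hbellman t htT (x+1), hbellman t htT (x+2)]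
      have hsum1 : ∑ i, (⨆ r : ℝ, b t i r * (r * Q i - (VPQ (t+1) x - VPQ (t+1) (x+1))))
          ≤ (∑ i, ⨆ r : ℝ, b t i r * (r * Q i - (VPQ (t+1) (x+1) - VPQ (t+1) (x+2))))
            + (∑ i, marr t i) *
              ((VPQ (t+1) (x+1) - VPQ (t+1) (x+2)) - (VPQ (t+1) x - VPQ (t+1) (x+1))) := by
        rw [Finset.sum_mul, ← Finset.sum_add_distrib]
        exact Finset.sum_le_sum fun i _ => fact2 t htT i x (x+1) hab
      have hsum2 : ∑ i, (⨆ r : ℝ, b t i r * (r * Q i - (VPQ (t+1) (x+2) - VPQ (t+1) (x+3))))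
          ≤ ∑ i, ⨆ r : ℝ, b t i r * (r * Q i - (VPQ (t+1) (x+1) - VPQ (t+1) (x+2))) :=
        Finset.sum_le_sum fun i _ => fact1 t htT i (x+1) (x+2) hbc
      have hmle : (∑ i, marr t i) *
          ((VPQ (t+1) (x+1) - VPQ (t+1) (x+2)) - (VPQ (t+1) x - VPQ (t+1) (x+1)))
          ≤ (VPQ (t+1) (x+1) - VPQ (t+1) (x+2)) - (VPQ (t+1) x - VPQ (t+1) (x+1)) := by
        have := hmsum t htT
        nlinarith [Finset.sum_nonneg (fun i (_ : i ∈ Finset.univ) => hmarr t i)]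
      have e2 : x + 1 + 1 = x + 2 := rfl
      have e3 : x + 2 + 1 = x + 3 := rfl
      rw [e2, e3]
      linarith
  -- Proposition 2
  intro t ht x
  have hconc : VPQ (t+1) x - VPQ (t+1) (x+1) ≤ VPQ (t+1) (x+1) - VPQ (t+1) (x+2) :=
    conc (T - (t+1)) (t+1) (by omega) x
  have hsum : ∑ i, (⨆ r : ℝ, b t i r * (r * Q i - (VPQ (t+1) (x+1) - VPQ (t+1) (x+2))))
      ≤ ∑ i, ⨆ r : ℝ, b t i r * (r * Q i - (VPQ (t+1) x - VPQ (t+1) (x+1))) :=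
    Finset.sum_le_sum fun i _ => fact1 t ht i x (x+1) hconc
  rw [ge_iff_le, hbellman t ht x, hbellman t ht (x+1)]
  have e2 : x + 1 + 1 = x + 2 := rfl
  rw [e2]
  linarith
end

section
/- Proposition 3 (PQ prices are nondecreasing in the inventory level): For every t ∈ {0,…,T−1}, every x ∈ ℕ and every type i ∈ {1,…,m}, r_i^{PQ}(t,x) ≤ r_i^{PQ}(t,x+1). -/
open MeasureTheory ProbabilityTheory


private lemma max_fourpoint (C a b c : ℝ) (hb : 0 ≤ b) (hc : 0 ≤ c) :
    max (a + b - C) 0 + max (a + c - C) 0 ≤ max (a - C) 0 + max (a + b + c - C) 0 := by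
  rcases max_cases (a + b - C) 0 with ⟨e1, r1⟩ | ⟨e1, r1⟩ <;>
  rcases max_cases (a + c - C) 0 with ⟨e2, r2⟩ | ⟨e2, r2⟩ <;>
  rcases max_cases (a - C) 0 with ⟨e3, r3⟩ | ⟨e3, r3⟩ <;>
  rcases max_cases (a + b + c - C) 0 with ⟨e4, r4⟩ | ⟨e4, r4⟩ <;>
  rw [e1, e2, e3, e4] <;> linarith

private lemma convex_fourpoint {f : ℝ → ℝ} (hconv : ConvexOn ℝ Set.univ f)
    (hmono : Monotone f) {p q q' s : ℝ} (hpq : p ≤ q) (hqs : q ≤ s)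
    (hpq' : p ≤ q') (hq's : q' ≤ s) (hsum : q + q' ≤ p + s) :
    f q + f q' ≤ f p + f s := by
  rcases eq_or_lt_of_le (hpq.trans hqs) with h | h
  · have h1 : q = p := le_antisymm (h ▸ hqs) hpq
    have h2 : q' = p := le_antisymm (h ▸ hq's) hpq'
    rw [h1, h2]
    exact add_le_add le_rfl (hmono (hpq.trans hqs))
  · have hsp : (0:ℝ) < s - p := by linarith
    set l1 : ℝ := (s - q) / (s - p) with hl1def
    set l2 : ℝ := (s - q') / (s - p) with hl2def
    have hl1 : 0 ≤ l1 := div_nonneg (by linarith) hsp.le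
    have hl2 : 0 ≤ l2 := div_nonneg (by linarith) hsp.le
    have hl1' : 0 ≤ 1 - l1 := by
      rw [hl1def]; rw [sub_nonneg, div_le_one hsp]; linarith
    have hl2' : 0 ≤ 1 - l2 := by
      rw [hl2def]; rw [sub_nonneg, div_le_one hsp]; linarith
    have hq : l1 * p + (1 - l1) * s = q := by
      rw [hl1def]; field_simp; ring
    have hq' : l2 * p + (1 - l2) * s = q' := by
      rw [hl2def]; field_simp; ring
    have c1 := hconv.2 (Set.mem_univ p) (Set.mem_univ s) hl1 hl1' (by ring)
    have c2 := hconv.2 (Set.mem_univ p) (Set.mem_univ s) hl2 hl2' (by ring)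
    simp only [smul_eq_mul] at c1 c2
    rw [hq] at c1
    rw [hq'] at c2
    have hlsum : 1 ≤ l1 + l2 := by
      rw [hl1def, hl2def, ← add_div, le_div_iff₀ hsp]; linarith
    nlinarith [c1, c2, mul_nonneg (sub_nonneg.2 hlsum) (sub_nonneg.2 (hmono h.le))]


private lemma sum_convex_step {Ω : Type*} [MeasurableSpace Ω] (μ : Measure Ω)
    [IsProbabilityMeasure μ] (X : ℕ → Ω → ℝ) (hmeas : ∀ l, Measurable (X l))
    (hind : iIndepFun X μ)
    (hid : ∀ l, IdentDistrib (X l) (X 0) μ μ)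
    (hnn : ∀ l ω, 0 ≤ X l ω) (g : ℝ → ℝ) (hgmeas : Measurable g)
    (hfour : ∀ a b c : ℝ, 0 ≤ b → 0 ≤ c → g (a + b) + g (a + c) ≤ g a + g (a + b + c))
    (hint : ∀ x : ℕ, Integrable (fun ω => g (∑ l ∈ Finset.range x, X l ω)) μ) (x : ℕ) :
    2 * (∫ ω, g (∑ l ∈ Finset.range (x + 1), X l ω) ∂μ) ≤
      (∫ ω, g (∑ l ∈ Finset.range x, X l ω) ∂μ) +
        ∫ ω, g (∑ l ∈ Finset.range (x + 2), X l ω) ∂μ := by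
  have hSmeas : Measurable (fun ω => ∑ l ∈ Finset.range x, X l ω) :=
    Finset.measurable_sum _ (fun l _ => hmeas l)
  have hsum_eq : (∑ j ∈ Finset.range x, X j) = fun ω => ∑ l ∈ Finset.range x, X l ω := by
    funext ω; simp [Finset.sum_apply]
  have i1 : IndepFun (fun ω => ∑ l ∈ Finset.range x, X l ω) (X x) μ := by
    have := hind.indepFun_finsetSum_of_notMem hmeas (Finset.notMem_range_self (n := x))
    rwa [hsum_eq] at this
  have i2 : IndepFun (fun ω => ∑ l ∈ Finset.range x, X l ω) (X (x+1)) μ := by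
    have := hind.indepFun_finsetSum_of_notMem hmeas
      (show x + 1 ∉ Finset.range x by simp only [Finset.mem_range]; omega)
    rwa [hsum_eq] at this
  have hmap : μ.map (X x) = μ.map (X (x+1)) := (hid x).map_eq.trans (hid (x+1)).map_eq.symm
  have p1 := (indepFun_iff_map_prod_eq_prod_map_map hSmeas.aemeasurable
    (hmeas x).aemeasurable).1 i1
  have p2 := (indepFun_iff_map_prod_eq_prod_map_map hSmeas.aemeasurable
    (hmeas (x+1)).aemeasurable).1 i2
  have hpair : IdentDistrib (fun ω => ((∑ l ∈ Finset.range x, X l ω), X x ω))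
      (fun ω => ((∑ l ∈ Finset.range x, X l ω), X (x+1) ω)) μ μ :=
    ⟨(hSmeas.prodMk (hmeas x)).aemeasurable, (hSmeas.prodMk (hmeas (x+1))).aemeasurable,
      by rw [p1, p2, hmap]⟩
  have hadd : IdentDistrib (fun ω => g ((∑ l ∈ Finset.range x, X l ω) + X x ω))
      (fun ω => g ((∑ l ∈ Finset.range x, X l ω) + X (x+1) ω)) μ μ :=
    hpair.comp (hgmeas.comp measurable_add)
  have e1 : (fun ω => g ((∑ l ∈ Finset.range x, X l ω) + X x ω))
      = fun ω => g (∑ l ∈ Finset.range (x+1), X l ω) := by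
    funext ω; rw [Finset.sum_range_succ]
  have int1 : Integrable (fun ω => g ((∑ l ∈ Finset.range x, X l ω) + X x ω)) μ := by
    rw [e1]; exact hint (x+1)
  have int2 : Integrable (fun ω => g ((∑ l ∈ Finset.range x, X l ω) + X (x+1) ω)) μ :=
    hadd.integrable_snd int1
  have ieq : (∫ ω, g ((∑ l ∈ Finset.range x, X l ω) + X x ω) ∂μ)
      = ∫ ω, g ((∑ l ∈ Finset.range x, X l ω) + X (x+1) ω) ∂μ := hadd.integral_eq
  have hpt : ∀ ω, g ((∑ l ∈ Finset.range x, X l ω) + X x ω)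
      + g ((∑ l ∈ Finset.range x, X l ω) + X (x+1) ω)
      ≤ g (∑ l ∈ Finset.range x, X l ω) + g (∑ l ∈ Finset.range (x+2), X l ω) := by
    intro ω
    have h4 := hfour (∑ l ∈ Finset.range x, X l ω) (X x ω) (X (x+1) ω) (hnn x ω) (hnn (x+1) ω)
    have hs : ∑ l ∈ Finset.range (x+2), X l ω
        = (∑ l ∈ Finset.range x, X l ω) + X x ω + X (x+1) ω := by
      rw [Finset.sum_range_succ, Finset.sum_range_succ]
    rw [hs]; exact h4
  have hmono := integral_mono (int1.add int2) ((hint x).add (hint (x+2))) hpt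
  simp only [Pi.add_apply] at hmono
  rw [integral_add int1 int2, integral_add (hint x) (hint (x+2))] at hmono
  have E1 : (∫ ω, g ((∑ l ∈ Finset.range x, X l ω) + X x ω) ∂μ)
      = ∫ ω, g (∑ l ∈ Finset.range (x+1), X l ω) ∂μ := by rw [e1]
  linarith [hmono, ieq, E1]


private lemma iSup_shift {b : ℝ → ℝ} {M Q d d' : ℝ} (hbM : ∀ r, b r ≤ M) (hdd : d ≤ d')
    (h2 : BddAbove (Set.range fun r => b r * (r * Q - d'))) :
    (⨆ r : ℝ, b r * (r * Q - d)) ≤ (⨆ r : ℝ, b r * (r * Q - d')) + M * (d' - d) := by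
  refine ciSup_le fun r => ?_
  have h1 : b r * (r * Q - d) = b r * (r * Q - d') + b r * (d' - d) := by ring
  rw [h1]
  exact add_le_add (le_ciSup h2 r)
    (mul_le_mul_of_nonneg_right (hbM r) (by linarith))

private lemma iSup_antitone {b : ℝ → ℝ} {Q d d' : ℝ} (hb0 : ∀ r, 0 ≤ b r) (hdd : d ≤ d')
    (h1 : BddAbove (Set.range fun r => b r * (r * Q - d))) :
    (⨆ r : ℝ, b r * (r * Q - d')) ≤ ⨆ r : ℝ, b r * (r * Q - d) := by
  refine ciSup_le fun r => le_trans ?_ (le_ciSup h1 r)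
  exact mul_le_mul_of_nonneg_left (by linarith) (hb0 r)

/-- Proposition 3 (PQ prices are nondecreasing in the inventory level): in the
quantity-based (PQ) model, where `rPQ t x i` is the greatest maximizer over
`r ∈ ℝ` of `b t i r * (r * Q i - (VPQ (t+1) x - VPQ (t+1) (x+1)))`, for
every `t ∈ {0,…,T-1}`, every `x ∈ ℕ` and every type `i`,
`rPQ t x i ≤ rPQ t (x+1) i`. -/
theorem stmt_8
    {Ω : Type*} [MeasurableSpace Ω] (μ : Measure Ω) [IsProbabilityMeasure μ]
    (T m : ℕ) (hT : 1 ≤ T) (hm : 1 ≤ m)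
    -- arrival probabilities
    (marr : ℕ → Fin m → ℝ) (hmarr : ∀ t i, 0 ≤ marr t i)
    (hmsum : ∀ t, t < T → ∑ i, marr t i ≤ 1)
    -- reservation-price distribution functions
    (F : ℕ → Fin m → ℝ → ℝ) (hFmono : ∀ t i, Monotone (F t i))
    (hF0 : ∀ t i r, 0 ≤ F t i r) (hF1 : ∀ t i r, F t i r ≤ 1)
    (b : ℕ → Fin m → ℝ → ℝ) (hb : ∀ t i r, b t i r = marr t i * (1 - F t i r))
    -- expected chargeable weights
    (Q : Fin m → ℝ) (hQ : ∀ i, 0 < Q i)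
    -- penalty functions and capacities
    (hw hv : ℝ → ℝ) (hwmono : Monotone hw) (hvmono : Monotone hv)
    (hwconv : ConvexOn ℝ Set.univ hw) (hvconv : ConvexOn ℝ Set.univ hv)
    (hw0 : hw 0 = 0) (hv0 : hv 0 = 0)
    (Cw Cv : ℝ) (hCw : 0 < Cw) (hCv : 0 < Cv)
    -- i.i.d. weight-volume pairs, nonnegative, with finite means and variances
    (W V : ℕ → Ω → ℝ)
    (hWVmeas : ∀ l, Measurable (fun ω => (W l ω, V l ω)))
    (hindep : iIndepFun (fun l ω => (W l ω, V l ω)) μ)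
    (hident : ∀ l, IdentDistrib (fun ω => (W l ω, V l ω))
      (fun ω => (W 0 ω, V 0 ω)) μ μ)
    (hWnonneg : ∀ l ω, 0 ≤ W l ω) (hVnonneg : ∀ l ω, 0 ≤ V l ω)
    (hWL2 : ∀ l, MemLp (W l) 2 μ) (hVL2 : ∀ l, MemLp (V l) 2 μ)
    (hintW : ∀ x : ℕ, Integrable
      (fun ω => hw (max ((∑ l ∈ Finset.range x, W l ω) - Cw) 0)) μ)
    (hintV : ∀ x : ℕ, Integrable
      (fun ω => hv (max ((∑ l ∈ Finset.range x, V l ω) - Cv) 0)) μ)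
    -- the PQ value function: boundary condition and Bellman equation
    (VPQ : ℕ → ℕ → ℝ)
    (hbdd : ∀ t, t < T → ∀ x : ℕ, ∀ i, BddAbove (Set.range fun r : ℝ =>
      b t i r * (r * Q i - (VPQ (t + 1) x - VPQ (t + 1) (x + 1)))))
    (hboundary : ∀ x : ℕ, VPQ T x =
      -(∫ ω, hw (max ((∑ l ∈ Finset.range x, W l ω) - Cw) 0) ∂μ)
      - ∫ ω, hv (max ((∑ l ∈ Finset.range x, V l ω) - Cv) 0) ∂μ)
    (hbellman : ∀ t, t < T → ∀ x : ℕ, VPQ t x =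
      (∑ i, ⨆ r : ℝ, b t i r * (r * Q i - (VPQ (t + 1) x - VPQ (t + 1) (x + 1))))
      + VPQ (t + 1) x)
    -- the PQ price: the greatest maximizer of the one-period objective
    (rPQ : ℕ → ℕ → Fin m → ℝ)
    (hrmax : ∀ t, t < T → ∀ x : ℕ, ∀ i, IsMaxOn (fun r : ℝ =>
      b t i r * (r * Q i - (VPQ (t + 1) x - VPQ (t + 1) (x + 1))))
      Set.univ (rPQ t x i))
    (hrgreatest : ∀ t, t < T → ∀ x : ℕ, ∀ i, ∀ r : ℝ, IsMaxOn (fun r : ℝ =>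
      b t i r * (r * Q i - (VPQ (t + 1) x - VPQ (t + 1) (x + 1))))
      Set.univ r → r ≤ rPQ t x i) :
    ∀ t, t < T → ∀ x : ℕ, ∀ i, rPQ t x i ≤ rPQ t (x + 1) i := by
  -- measurability of W, V
  have hWmeas : ∀ l, Measurable (W l) := fun l => measurable_fst.comp (hWVmeas l)
  have hVmeas : ∀ l, Measurable (V l) := fun l => measurable_snd.comp (hWVmeas l)
  have hWind : iIndepFun W μ :=
    hindep.comp (fun _ => Prod.fst) (fun _ => measurable_fst)
  have hVind : iIndepFun V μ :=
    hindep.comp (fun _ => Prod.snd) (fun _ => measurable_snd)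
  have hWid : ∀ l, IdentDistrib (W l) (W 0) μ μ := fun l => (hident l).comp measurable_fst
  have hVid : ∀ l, IdentDistrib (V l) (V 0) μ μ := fun l => (hident l).comp measurable_snd
  -- the penalty integrands and their four-point property
  have hgw_meas : Measurable (fun z : ℝ => hw (max (z - Cw) 0)) :=
    hwmono.measurable.comp ((measurable_id.sub measurable_const).max measurable_const)
  have hgv_meas : Measurable (fun z : ℝ => hv (max (z - Cv) 0)) :=
    hvmono.measurable.comp ((measurable_id.sub measurable_const).max measurable_const)
  have hfourw : ∀ a b c : ℝ, 0 ≤ b → 0 ≤ c →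
      hw (max (a + b - Cw) 0) + hw (max (a + c - Cw) 0)
        ≤ hw (max (a - Cw) 0) + hw (max (a + b + c - Cw) 0) := by
    intro a bb cc hb0 hc0
    exact convex_fourpoint hwconv hwmono (max_le_max (by linarith) le_rfl)
      (max_le_max (by linarith) le_rfl) (max_le_max (by linarith) le_rfl)
      (max_le_max (by linarith) le_rfl) (max_fourpoint Cw a bb cc hb0 hc0)
  have hfourv : ∀ a b c : ℝ, 0 ≤ b → 0 ≤ c →
      hv (max (a + b - Cv) 0) + hv (max (a + c - Cv) 0)
        ≤ hv (max (a - Cv) 0) + hv (max (a + b + c - Cv) 0) := by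
    intro a bb cc hb0 hc0
    exact convex_fourpoint hvconv hvmono (max_le_max (by linarith) le_rfl)
      (max_le_max (by linarith) le_rfl) (max_le_max (by linarith) le_rfl)
      (max_le_max (by linarith) le_rfl) (max_fourpoint Cv a bb cc hb0 hc0)
  -- boundary concavity
  have hbnd : ∀ y : ℕ, VPQ T y - VPQ T (y + 1) ≤ VPQ T (y + 1) - VPQ T (y + 1 + 1) := by
    intro y
    have hwstep : 2 * (∫ ω, hw (max ((∑ l ∈ Finset.range (y + 1), W l ω) - Cw) 0) ∂μ) ≤
        (∫ ω, hw (max ((∑ l ∈ Finset.range y, W l ω) - Cw) 0) ∂μ) +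
          ∫ ω, hw (max ((∑ l ∈ Finset.range (y + 2), W l ω) - Cw) 0) ∂μ :=
      sum_convex_step μ W hWmeas hWind hWid hWnonneg
        (fun z => hw (max (z - Cw) 0)) hgw_meas hfourw hintW y
    have hvstep : 2 * (∫ ω, hv (max ((∑ l ∈ Finset.range (y + 1), V l ω) - Cv) 0) ∂μ) ≤
        (∫ ω, hv (max ((∑ l ∈ Finset.range y, V l ω) - Cv) 0) ∂μ) +
          ∫ ω, hv (max ((∑ l ∈ Finset.range (y + 2), V l ω) - Cv) 0) ∂μ :=
      sum_convex_step μ V hVmeas hVind hVid hVnonneg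
        (fun z => hv (max (z - Cv) 0)) hgv_meas hfourv hintV y
    have e0 := hboundary y
    have e1 := hboundary (y + 1)
    have e2 := hboundary (y + 1 + 1)
    have hy2 : y + 1 + 1 = y + 2 := rfl
    rw [hy2] at e2
    rw [e0, e1]
    rw [show VPQ T (y + 1 + 1) = VPQ T (y + 2) from rfl, e2]
    linarith
  -- b bounds
  have hb0 : ∀ t (i : Fin m) r, 0 ≤ b t i r := fun t i r => by
    rw [hb]; exact mul_nonneg (hmarr t i) (by linarith [hF1 t i r])
  have hbM : ∀ t (i : Fin m) r, b t i r ≤ marr t i := fun t i r => by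
    rw [hb]
    have := mul_le_mul_of_nonneg_left
      (show (1 : ℝ) - F t i r ≤ 1 by linarith [hF0 t i r]) (hmarr t i)
    linarith
  -- concavity of the value function at every time, by backward induction
  have main : ∀ k t', t' + k = T → ∀ y : ℕ,
      VPQ t' y - VPQ t' (y + 1) ≤ VPQ t' (y + 1) - VPQ t' (y + 1 + 1) := by
    intro k
    induction k with
    | zero =>
      intro t' h y
      have : t' = T := by omega
      subst this
      exact hbnd y
    | succ k ih =>
      intro t' h y
      have ht' : t' < T := by omega
      have hdm := ih (t' + 1) (by omega)
      have h01 : VPQ (t' + 1) y - VPQ (t' + 1) (y + 1)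
          ≤ VPQ (t' + 1) (y + 1) - VPQ (t' + 1) (y + 1 + 1) := hdm y
      have h12 : VPQ (t' + 1) (y + 1) - VPQ (t' + 1) (y + 1 + 1)
          ≤ VPQ (t' + 1) (y + 1 + 1) - VPQ (t' + 1) (y + 1 + 1 + 1) := hdm (y + 1)
      have key1 : ∀ i : Fin m,
          (⨆ r : ℝ, b t' i r * (r * Q i - (VPQ (t' + 1) y - VPQ (t' + 1) (y + 1))))
            ≤ (⨆ r : ℝ, b t' i r * (r * Q i
                - (VPQ (t' + 1) (y + 1) - VPQ (t' + 1) (y + 1 + 1))))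
              + marr t' i * ((VPQ (t' + 1) (y + 1) - VPQ (t' + 1) (y + 1 + 1))
                - (VPQ (t' + 1) y - VPQ (t' + 1) (y + 1))) :=
        fun i => iSup_shift (hbM t' i) h01 (hbdd t' ht' (y + 1) i)
      have key2 : ∀ i : Fin m,
          (⨆ r : ℝ, b t' i r * (r * Q i
              - (VPQ (t' + 1) (y + 1 + 1) - VPQ (t' + 1) (y + 1 + 1 + 1))))
            ≤ ⨆ r : ℝ, b t' i r * (r * Q i
              - (VPQ (t' + 1) (y + 1) - VPQ (t' + 1) (y + 1 + 1))) :=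
        fun i => iSup_antitone (hb0 t' i) h12 (hbdd t' ht' (y + 1) i)
      have hs1 := Finset.sum_le_sum (fun i (_ : i ∈ Finset.univ) => key1 i)
      have hs2 := Finset.sum_le_sum (fun i (_ : i ∈ Finset.univ) => key2 i)
      rw [Finset.sum_add_distrib, ← Finset.sum_mul] at hs1
      have hmul : (∑ i, marr t' i) * ((VPQ (t' + 1) (y + 1) - VPQ (t' + 1) (y + 1 + 1))
            - (VPQ (t' + 1) y - VPQ (t' + 1) (y + 1)))
          ≤ 1 * ((VPQ (t' + 1) (y + 1) - VPQ (t' + 1) (y + 1 + 1))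
            - (VPQ (t' + 1) y - VPQ (t' + 1) (y + 1))) :=
        mul_le_mul_of_nonneg_right (hmsum t' ht') (by linarith)
      have e0 := hbellman t' ht' y
      have e1 := hbellman t' ht' (y + 1)
      have e2 := hbellman t' ht' (y + 1 + 1)
      rw [e0, e1, e2]
      linarith
  -- conclusion: monotonicity of the greatest maximizer
  intro t ht x i
  have hd : VPQ (t + 1) x - VPQ (t + 1) (x + 1)
      ≤ VPQ (t + 1) (x + 1) - VPQ (t + 1) (x + 1 + 1) := main (T - (t + 1)) (t + 1) (by omega) x
  have hmax0 := hrmax t ht x i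
  have hmax1 := hrmax t ht (x + 1) i
  rcases le_total (rPQ t x i) (rPQ t (x + 1) i) with hle | hle
  · exact hle
  · refine hrgreatest t ht (x + 1) i (rPQ t x i) (isMaxOn_iff.mpr fun s _ => ?_)
    have h1 := isMaxOn_iff.mp hmax1 s (Set.mem_univ s)
    have h2 := isMaxOn_iff.mp hmax0 (rPQ t (x + 1) i) (Set.mem_univ _)
    have hbr : b t i (rPQ t x i) ≤ b t i (rPQ t (x + 1) i) := by
      rw [hb, hb]
      exact mul_le_mul_of_nonneg_left (by linarith [hFmono t i hle]) (hmarr t i)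
    have hdd : 0 ≤ (VPQ (t + 1) (x + 1) - VPQ (t + 1) (x + 1 + 1))
        - (VPQ (t + 1) x - VPQ (t + 1) (x + 1)) := by linarith
    have hmm := mul_le_mul_of_nonneg_right hbr hdd
    nlinarith [h1, h2, hmm]
end

section
/- Proposition 4 (PQ prices are nonincreasing in time under time-homogeneity): If the model is time-homogeneous, i.e., m_t^i = m^i and F_t^i = F^i for all t ∈ {0,…,T−1} and all i, then for every t ∈ {0,…,T−2}, every x ∈ ℕ and every type i ∈ {1,…,m}, r_i^{PQ}(t+1,x) ≤ r_i^{PQ}(t,x). -/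
open MeasureTheory ProbabilityTheory

/-- Four-point inequality for convex functions. -/
lemma fourPoint {g : ℝ → ℝ} (hg : ConvexOn ℝ Set.univ g) {a u v : ℝ}
    (hu : 0 ≤ u) (hv : 0 ≤ v) :
    g (a + u) + g (a + v) ≤ g a + g (a + u + v) := by
  rcases eq_or_lt_of_le (add_nonneg hu hv) with h | h
  · have hu0 : u = 0 := by linarith
    have hv0 : v = 0 := by linarith
    simp [hu0, hv0]
  · set s := u / (u + v) with hsdef
    set t := v / (u + v) with htdef
    have hs0 : 0 ≤ s := div_nonneg hu h.le
    have ht0 : 0 ≤ t := div_nonneg hv h.le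
    have hst : s + t = 1 := by
      rw [hsdef, htdef, ← add_div, div_self (ne_of_gt h)]
    have hsu : s * (u + v) = u := by
      rw [hsdef]; field_simp
    have htv : t * (u + v) = v := by
      rw [htdef]; field_simp
    have key1 := hg.2 (Set.mem_univ a) (Set.mem_univ (a + u + v)) ht0 hs0 (by linarith)
    have key2 := hg.2 (Set.mem_univ a) (Set.mem_univ (a + u + v)) hs0 ht0 hst
    simp only [smul_eq_mul] at key1 key2
    have e1 : t * a + s * (a + u + v) = a + u := by
      have : t * a + s * (a + u + v) = (s + t) * a + s * (u + v) := by ring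
      rw [this, hst, hsu]; ring
    have e2 : s * a + t * (a + u + v) = a + v := by
      have : s * a + t * (a + u + v) = (s + t) * a + t * (u + v) := by ring
      rw [this, hst, htv]; ring
    rw [e1] at key1
    rw [e2] at key2
    have hadd := add_le_add key1 key2
    have hrw : t * g a + s * g (a + u + v) + (s * g a + t * g (a + u + v))
        = (s + t) * (g a + g (a + u + v)) := by ring
    rw [hrw, hst, one_mul] at hadd
    linarith

lemma myPosPart_mono (C : ℝ) : Monotone (fun y : ℝ => max (y - C) 0) :=
  fun _ _ h => max_le_max (by linarith) le_rfl

lemma myPosPart_convex (C : ℝ) : ConvexOn ℝ Set.univ (fun y : ℝ => max (y - C) 0) := by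
  refine ⟨convex_univ, fun y _ z _ a bb ha hb hab => ?_⟩
  simp only [smul_eq_mul]
  apply max_le
  · have h1 : a * (y - C) ≤ a * max (y - C) 0 :=
      mul_le_mul_of_nonneg_left (le_max_left _ _) ha
    have h2 : bb * (z - C) ≤ bb * max (z - C) 0 :=
      mul_le_mul_of_nonneg_left (le_max_left _ _) hb
    have h3 : a * (y - C) + bb * (z - C) = a * y + bb * z - C := by
      linear_combination (-C) * hab
    linarith
  · exact add_nonneg (mul_nonneg ha (le_max_right _ _)) (mul_nonneg hb (le_max_right _ _))

/-- Four-point inequality for a monotone convex function composed with a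
monotone convex function. -/
lemma fourPoint_comp {hw p : ℝ → ℝ} (hwconv : ConvexOn ℝ Set.univ hw)
    (hwmono : Monotone hw) (hpconv : ConvexOn ℝ Set.univ p) (hpmono : Monotone p)
    {a u v : ℝ} (hu : 0 ≤ u) (hv : 0 ≤ v) :
    hw (p (a + u)) + hw (p (a + v)) ≤ hw (p a) + hw (p (a + u + v)) := by
  have hδ1 : 0 ≤ p (a + v) - p a := sub_nonneg.2 (hpmono (by linarith))
  have hδ2 : 0 ≤ p (a + u) - p a := sub_nonneg.2 (hpmono (by linarith))
  have h12 : p (a + u) + p (a + v) ≤ p a + p (a + u + v) := fourPoint hpconv hu hv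
  have key := fourPoint hwconv (a := p a) hδ1 hδ2
  rw [show p a + (p (a + v) - p a) = p (a + v) from by ring,
      show p a + (p (a + u) - p a) = p (a + u) from by ring] at key
  have hlast : hw (p (a + v) + (p (a + u) - p a)) ≤ hw (p (a + u + v)) :=
    hwmono (by linarith)
  linarith

/-- Discrete convexity of `x ↦ ∫ g (∑_{l<x} X l)` for i.i.d. nonnegative `X`
and `g` satisfying the four-point inequality. -/
lemma prob_step {Ω : Type*} [MeasurableSpace Ω] (μ : Measure Ω) [IsProbabilityMeasure μ]
    (X : ℕ → Ω → ℝ) (hmeas : ∀ l, Measurable (X l))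
    (hindep : iIndepFun X μ)
    (hident : ∀ l, IdentDistrib (X l) (X 0) μ μ)
    (hnonneg : ∀ l ω, 0 ≤ X l ω)
    (g : ℝ → ℝ) (hgmeas : Measurable g)
    (hg4 : ∀ a u v : ℝ, 0 ≤ u → 0 ≤ v → g (a + u) + g (a + v) ≤ g a + g (a + u + v))
    (hint : ∀ x : ℕ, Integrable (fun ω => g (∑ l ∈ Finset.range x, X l ω)) μ)
    (x : ℕ) :
    (∫ ω, g (∑ l ∈ Finset.range (x + 1), X l ω) ∂μ)
      - ∫ ω, g (∑ l ∈ Finset.range x, X l ω) ∂μ ≤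
    (∫ ω, g (∑ l ∈ Finset.range (x + 2), X l ω) ∂μ)
      - ∫ ω, g (∑ l ∈ Finset.range (x + 1), X l ω) ∂μ := by
  set S : Ω → ℝ := fun ω => ∑ l ∈ Finset.range x, X l ω with hS
  have hSmeas : Measurable S := Finset.measurable_sum _ (fun l _ => hmeas l)
  have hsum : (∑ j ∈ Finset.range x, X j) = S := funext fun ω => by simp [hS]
  have indep1 : IndepFun S (X x) μ := by
    have h := hindep.indepFun_finsetSum_of_notMem hmeas (Finset.notMem_range_self (n := x))
    rwa [hsum] at h
  have indep2 : IndepFun S (X (x + 1)) μ := by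
    have h := hindep.indepFun_finsetSum_of_notMem hmeas
      (s := Finset.range x) (i := x + 1) (by simp)
    rwa [hsum] at h
  have identX : μ.map (X x) = μ.map (X (x + 1)) :=
    ((hident x).map_eq).trans ((hident (x + 1)).map_eq).symm
  have pairident : IdentDistrib (fun ω => (S ω, X x ω)) (fun ω => (S ω, X (x + 1) ω)) μ μ := by
    refine ⟨(hSmeas.prodMk (hmeas x)).aemeasurable,
      (hSmeas.prodMk (hmeas (x + 1))).aemeasurable, ?_⟩
    rw [(indepFun_iff_map_prod_eq_prod_map_map hSmeas.aemeasurable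
        (hmeas x).aemeasurable).1 indep1,
      (indepFun_iff_map_prod_eq_prod_map_map hSmeas.aemeasurable
        (hmeas (x + 1)).aemeasurable).1 indep2, identX]
  have gident : IdentDistrib (fun ω => g (S ω + X x ω)) (fun ω => g (S ω + X (x + 1) ω)) μ μ :=
    pairident.comp (hgmeas.comp (measurable_fst.add measurable_snd))
  have e1 : ∀ ω, (∑ l ∈ Finset.range (x + 1), X l ω) = S ω + X x ω := fun ω => by
    rw [Finset.sum_range_succ]
  have e2 : ∀ ω, (∑ l ∈ Finset.range (x + 2), X l ω) = S ω + X x ω + X (x + 1) ω := fun ω => by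
    rw [show x + 2 = (x + 1) + 1 from rfl, Finset.sum_range_succ, Finset.sum_range_succ]
  have inta : Integrable (fun ω => g (S ω + X x ω)) μ := by
    have h := hint (x + 1); simpa only [e1] using h
  have intb : Integrable (fun ω => g (S ω + X (x + 1) ω)) μ := gident.integrable_iff.1 inta
  have intc : Integrable (fun ω => g (S ω + X x ω + X (x + 1) ω)) μ := by
    have h := hint (x + 2); simpa only [e2] using h
  have intd : Integrable (fun ω => g (S ω)) μ := hint x
  have hmono : ∀ ω, g (S ω + X x ω) + g (S ω + X (x + 1) ω)
      ≤ g (S ω) + g (S ω + X x ω + X (x + 1) ω) := fun ω =>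
    hg4 (S ω) (X x ω) (X (x + 1) ω) (hnonneg x ω) (hnonneg (x + 1) ω)
  have hineq : (∫ ω, (g (S ω + X x ω) + g (S ω + X (x + 1) ω)) ∂μ)
      ≤ ∫ ω, (g (S ω) + g (S ω + X x ω + X (x + 1) ω)) ∂μ :=
    integral_mono (inta.add intb) (intd.add intc) hmono
  rw [integral_add inta intb, integral_add intd intc] at hineq
  have hkey : (∫ ω, g (S ω + X (x + 1) ω) ∂μ) = ∫ ω, g (S ω + X x ω) ∂μ :=
    gident.symm.integral_eq
  simp only [e1, e2]
  linarith

lemma sup_anti {f : ℝ → ℝ} (hf : ∀ r, 0 ≤ f r) {Qi c c' : ℝ} (hcc : c ≤ c')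
    (hbdd : BddAbove (Set.range fun r : ℝ => f r * (r * Qi - c))) :
    (⨆ r : ℝ, f r * (r * Qi - c')) ≤ ⨆ r : ℝ, f r * (r * Qi - c) :=
  ciSup_le fun r => le_trans
    (mul_le_mul_of_nonneg_left (by linarith) (hf r)) (le_ciSup hbdd r)

lemma sup_lip {f : ℝ → ℝ} {M : ℝ} (hfM : ∀ r, f r ≤ M) {Qi c c' : ℝ} (hcc : c ≤ c')
    (hbdd' : BddAbove (Set.range fun r : ℝ => f r * (r * Qi - c'))) :
    (⨆ r : ℝ, f r * (r * Qi - c)) ≤ (⨆ r : ℝ, f r * (r * Qi - c')) + M * (c' - c) := by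
  refine ciSup_le fun r => ?_
  have h1 : f r * (r * Qi - c') ≤ ⨆ r : ℝ, f r * (r * Qi - c') := le_ciSup hbdd' r
  have h2 : f r * (c' - c) ≤ M * (c' - c) :=
    mul_le_mul_of_nonneg_right (hfM r) (sub_nonneg.2 hcc)
  nlinarith [h1, h2]

/-- Proposition 4 (PQ prices are nonincreasing in time under
time-homogeneity): in the quantity-based (PQ) model, where `rPQ t x i` is
the greatest maximizer over `r ∈ ℝ` of
`b t i r * (r * Q i - (VPQ (t+1) x - VPQ (t+1) (x+1)))`, if the arrival
probabilities and reservation-price distributions are time-homogeneous, then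
for every `t ∈ {0,…,T-2}`, every `x ∈ ℕ` and every type `i`,
`rPQ (t+1) x i ≤ rPQ t x i`. -/
theorem stmt_9
    {Ω : Type*} [MeasurableSpace Ω] (μ : Measure Ω) [IsProbabilityMeasure μ]
    (T m : ℕ) (hT : 1 ≤ T) (hm : 1 ≤ m)
    -- arrival probabilities
    (marr : ℕ → Fin m → ℝ) (hmarr : ∀ t i, 0 ≤ marr t i)
    (hmsum : ∀ t, t < T → ∑ i, marr t i ≤ 1)
    -- reservation-price distribution functions
    (F : ℕ → Fin m → ℝ → ℝ) (hFmono : ∀ t i, Monotone (F t i))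
    (hF0 : ∀ t i r, 0 ≤ F t i r) (hF1 : ∀ t i r, F t i r ≤ 1)
    (b : ℕ → Fin m → ℝ → ℝ) (hb : ∀ t i r, b t i r = marr t i * (1 - F t i r))
    -- expected chargeable weights
    (Q : Fin m → ℝ) (hQ : ∀ i, 0 < Q i)
    -- penalty functions and capacities
    (hw hv : ℝ → ℝ) (hwmono : Monotone hw) (hvmono : Monotone hv)
    (hwconv : ConvexOn ℝ Set.univ hw) (hvconv : ConvexOn ℝ Set.univ hv)
    (hw0 : hw 0 = 0) (hv0 : hv 0 = 0)
    (Cw Cv : ℝ) (hCw : 0 < Cw) (hCv : 0 < Cv)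
    -- i.i.d. weight-volume pairs, nonnegative, with finite means and variances
    (W V : ℕ → Ω → ℝ)
    (hWVmeas : ∀ l, Measurable (fun ω => (W l ω, V l ω)))
    (hindep : iIndepFun (fun l ω => (W l ω, V l ω)) μ)
    (hident : ∀ l, IdentDistrib (fun ω => (W l ω, V l ω))
      (fun ω => (W 0 ω, V 0 ω)) μ μ)
    (hWnonneg : ∀ l ω, 0 ≤ W l ω) (hVnonneg : ∀ l ω, 0 ≤ V l ω)
    (hWL2 : ∀ l, MemLp (W l) 2 μ) (hVL2 : ∀ l, MemLp (V l) 2 μ)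
    (hintW : ∀ x : ℕ, Integrable
      (fun ω => hw (max ((∑ l ∈ Finset.range x, W l ω) - Cw) 0)) μ)
    (hintV : ∀ x : ℕ, Integrable
      (fun ω => hv (max ((∑ l ∈ Finset.range x, V l ω) - Cv) 0)) μ)
    -- the PQ value function: boundary condition and Bellman equation
    (VPQ : ℕ → ℕ → ℝ)
    (hbdd : ∀ t, t < T → ∀ x : ℕ, ∀ i, BddAbove (Set.range fun r : ℝ =>
      b t i r * (r * Q i - (VPQ (t + 1) x - VPQ (t + 1) (x + 1)))))
    (hboundary : ∀ x : ℕ, VPQ T x =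
      -(∫ ω, hw (max ((∑ l ∈ Finset.range x, W l ω) - Cw) 0) ∂μ)
      - ∫ ω, hv (max ((∑ l ∈ Finset.range x, V l ω) - Cv) 0) ∂μ)
    (hbellman : ∀ t, t < T → ∀ x : ℕ, VPQ t x =
      (∑ i, ⨆ r : ℝ, b t i r * (r * Q i - (VPQ (t + 1) x - VPQ (t + 1) (x + 1))))
      + VPQ (t + 1) x)
    -- the PQ price: the greatest maximizer of the one-period objective
    (rPQ : ℕ → ℕ → Fin m → ℝ)
    (hrmax : ∀ t, t < T → ∀ x : ℕ, ∀ i, IsMaxOn (fun r : ℝ =>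
      b t i r * (r * Q i - (VPQ (t + 1) x - VPQ (t + 1) (x + 1))))
      Set.univ (rPQ t x i))
    (hrgreatest : ∀ t, t < T → ∀ x : ℕ, ∀ i, ∀ r : ℝ, IsMaxOn (fun r : ℝ =>
      b t i r * (r * Q i - (VPQ (t + 1) x - VPQ (t + 1) (x + 1))))
      Set.univ r → r ≤ rPQ t x i)
    -- time-homogeneity
    (hhom_m : ∀ t, t < T → ∀ i, marr t i = marr 0 i)
    (hhom_F : ∀ t, t < T → ∀ i, ∀ r : ℝ, F t i r = F 0 i r) :
    ∀ t, t + 1 < T → ∀ x : ℕ, ∀ i, rPQ (t + 1) x i ≤ rPQ t x i := by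
  -- basic facts about b
  have hbnn : ∀ t i r, 0 ≤ b t i r := fun t i r => by
    rw [hb]; exact mul_nonneg (hmarr t i) (by linarith [hF1 t i r])
  have hble : ∀ t i r, b t i r ≤ marr t i := fun t i r => by
    rw [hb]; nlinarith [hF0 t i r, hmarr t i]
  have hbanti : ∀ t i, Antitone (b t i) := fun t i r1 r2 h => by
    rw [hb, hb]
    have hF := hFmono t i h
    nlinarith [hmarr t i]
  -- marginals of the i.i.d. pairs
  have hWmeas : ∀ l, Measurable (W l) := fun l => measurable_fst.comp (hWVmeas l)
  have hVmeas : ∀ l, Measurable (V l) := fun l => measurable_snd.comp (hWVmeas l)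
  have hWindep : iIndepFun W μ :=
    hindep.comp (fun _ => Prod.fst) (fun _ => measurable_fst)
  have hVindep : iIndepFun V μ :=
    hindep.comp (fun _ => Prod.snd) (fun _ => measurable_snd)
  have hWident : ∀ l, IdentDistrib (W l) (W 0) μ μ := fun l => (hident l).comp measurable_fst
  have hVident : ∀ l, IdentDistrib (V l) (V 0) μ μ := fun l => (hident l).comp measurable_snd
  -- discrete convexity of the terminal penalties
  have probW := prob_step μ W hWmeas hWindep hWident hWnonneg
    (fun y => hw (max (y - Cw) 0))
    ((hwmono.comp (myPosPart_mono Cw)).measurable)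
    (fun a u v hu hv => fourPoint_comp hwconv hwmono (myPosPart_convex Cw)
      (myPosPart_mono Cw) hu hv) hintW
  have probV := prob_step μ V hVmeas hVindep hVident hVnonneg
    (fun y => hv (max (y - Cv) 0))
    ((hvmono.comp (myPosPart_mono Cv)).measurable)
    (fun a u v hu hv' => fourPoint_comp hvconv hvmono (myPosPart_convex Cv)
      (myPosPart_mono Cv) hu hv') hintV
  -- concavity of the value function in x, by backward induction
  have conc : ∀ k : ℕ, ∀ s : ℕ, s + k = T → ∀ x : ℕ,
      VPQ s x - VPQ s (x + 1) ≤ VPQ s (x + 1) - VPQ s (x + 2) := by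
    intro k
    induction k with
    | zero =>
      intro s hs x
      have hsT : s = T := by omega
      subst hsT
      rw [hboundary x, hboundary (x + 1), hboundary (x + 2)]
      have pW := probW x
      have pV := probV x
      linarith
    | succ k IH =>
      intro s hs x
      have hsT : s < T := by omega
      have IH' := IH (s + 1) (by omega)
      have hb1 := hbellman s hsT x
      have hb2 := hbellman s hsT (x + 1)
      have hb3 := hbellman s hsT (x + 2)
      have hc12 := IH' x
      have hc23 := IH' (x + 1)
      -- per-type sup inequalities
      have hA : ∀ i : Fin m,
          (⨆ r : ℝ, b s i r * (r * Q i - (VPQ (s + 1) (x + 2) - VPQ (s + 1) (x + 2 + 1))))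
          ≤ ⨆ r : ℝ, b s i r * (r * Q i - (VPQ (s + 1) (x + 1) - VPQ (s + 1) (x + 1 + 1))) :=
        fun i => sup_anti (hbnn s i) hc23 (hbdd s hsT (x + 1) i)
      have hB : ∀ i : Fin m,
          (⨆ r : ℝ, b s i r * (r * Q i - (VPQ (s + 1) x - VPQ (s + 1) (x + 1))))
          ≤ (⨆ r : ℝ, b s i r * (r * Q i - (VPQ (s + 1) (x + 1) - VPQ (s + 1) (x + 1 + 1))))
            + marr s i * ((VPQ (s + 1) (x + 1) - VPQ (s + 1) (x + 2))
              - (VPQ (s + 1) x - VPQ (s + 1) (x + 1))) :=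
        fun i => sup_lip (hble s i) hc12 (hbdd s hsT (x + 1) i)
      have hsumA := Finset.sum_le_sum (fun i (_ : i ∈ Finset.univ) => hA i)
      have hsumB := Finset.sum_le_sum (fun i (_ : i ∈ Finset.univ) => hB i)
      rw [Finset.sum_add_distrib, ← Finset.sum_mul] at hsumB
      have hmsum' : (∑ i, marr s i) ≤ 1 := hmsum s hsT
      have hd : 0 ≤ (VPQ (s + 1) (x + 1) - VPQ (s + 1) (x + 2))
          - (VPQ (s + 1) x - VPQ (s + 1) (x + 1)) := by linarith
      have hmul : (∑ i, marr s i) * ((VPQ (s + 1) (x + 1) - VPQ (s + 1) (x + 2))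
          - (VPQ (s + 1) x - VPQ (s + 1) (x + 1)))
          ≤ 1 * ((VPQ (s + 1) (x + 1) - VPQ (s + 1) (x + 2))
          - (VPQ (s + 1) x - VPQ (s + 1) (x + 1))) :=
        mul_le_mul_of_nonneg_right hmsum' hd
      linarith
  have conc' : ∀ s : ℕ, s ≤ T → ∀ x : ℕ,
      VPQ s x - VPQ s (x + 1) ≤ VPQ s (x + 1) - VPQ s (x + 2) :=
    fun s hs x => conc (T - s) s (by omega) x
  -- opportunity costs are nonincreasing in time
  have timemono : ∀ s : ℕ, s < T → ∀ x : ℕ,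
      VPQ (s + 1) x - VPQ (s + 1) (x + 1) ≤ VPQ s x - VPQ s (x + 1) := by
    intro s hsT x
    have hb1 := hbellman s hsT x
    have hb2 := hbellman s hsT (x + 1)
    have hcc := conc' (s + 1) (by omega) x
    have hA : ∀ i : Fin m,
        (⨆ r : ℝ, b s i r * (r * Q i - (VPQ (s + 1) (x + 1) - VPQ (s + 1) (x + 1 + 1))))
        ≤ ⨆ r : ℝ, b s i r * (r * Q i - (VPQ (s + 1) x - VPQ (s + 1) (x + 1))) :=
      fun i => sup_anti (hbnn s i) hcc (hbdd s hsT x i)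
    have hsumA := Finset.sum_le_sum (fun i (_ : i ∈ Finset.univ) => hA i)
    linarith
  -- final argument: monotone greatest maximizer
  intro t ht1 x i
  have ht : t < T := by omega
  have hc : VPQ (t + 1 + 1) x - VPQ (t + 1 + 1) (x + 1)
      ≤ VPQ (t + 1) x - VPQ (t + 1) (x + 1) := timemono (t + 1) ht1 x
  have hbe : ∀ r : ℝ, b (t + 1) i r = b t i r := fun r => by
    rw [hb, hb, hhom_m t ht i, hhom_m (t + 1) ht1 i, hhom_F t ht i r, hhom_F (t + 1) ht1 i r]
  by_contra hcon
  push_neg at hcon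
  -- hcon : rPQ t x i < rPQ (t+1) x i
  have hanti : b t i (rPQ (t + 1) x i) ≤ b t i (rPQ t x i) := hbanti t i hcon.le
  have M1 : b t i (rPQ (t + 1) x i) * ((rPQ (t + 1) x i) * Q i
      - (VPQ (t + 1) x - VPQ (t + 1) (x + 1)))
      ≤ b t i (rPQ t x i) * ((rPQ t x i) * Q i - (VPQ (t + 1) x - VPQ (t + 1) (x + 1))) :=
    isMaxOn_iff.1 (hrmax t ht x i) (rPQ (t + 1) x i) (Set.mem_univ _)
  have M2 : b t i (rPQ t x i) * ((rPQ t x i) * Q i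
      - (VPQ (t + 1 + 1) x - VPQ (t + 1 + 1) (x + 1)))
      ≤ b t i (rPQ (t + 1) x i) * ((rPQ (t + 1) x i) * Q i
      - (VPQ (t + 1 + 1) x - VPQ (t + 1 + 1) (x + 1))) := by
    have h := isMaxOn_iff.1 (hrmax (t + 1) ht1 x i) (rPQ t x i) (Set.mem_univ _)
    simpa only [hbe] using h
  have key : b t i (rPQ t x i) * ((VPQ (t + 1) x - VPQ (t + 1) (x + 1))
      - (VPQ (t + 1 + 1) x - VPQ (t + 1 + 1) (x + 1)))
      ≤ b t i (rPQ (t + 1) x i) * ((VPQ (t + 1) x - VPQ (t + 1) (x + 1))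
      - (VPQ (t + 1 + 1) x - VPQ (t + 1 + 1) (x + 1))) := by nlinarith [M1, M2]
  have hprod : b t i (rPQ (t + 1) x i) * ((VPQ (t + 1) x - VPQ (t + 1) (x + 1))
      - (VPQ (t + 1 + 1) x - VPQ (t + 1 + 1) (x + 1)))
      ≤ b t i (rPQ t x i) * ((VPQ (t + 1) x - VPQ (t + 1) (x + 1))
      - (VPQ (t + 1 + 1) x - VPQ (t + 1 + 1) (x + 1))) :=
    mul_le_mul_of_nonneg_right hanti (by linarith)
  have heq : b t i (rPQ t x i) * ((VPQ (t + 1) x - VPQ (t + 1) (x + 1))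
      - (VPQ (t + 1 + 1) x - VPQ (t + 1 + 1) (x + 1)))
      = b t i (rPQ (t + 1) x i) * ((VPQ (t + 1) x - VPQ (t + 1) (x + 1))
      - (VPQ (t + 1 + 1) x - VPQ (t + 1 + 1) (x + 1))) := le_antisymm key hprod
  have hmax2 : IsMaxOn (fun r : ℝ => b t i r * (r * Q i
      - (VPQ (t + 1) x - VPQ (t + 1) (x + 1)))) Set.univ (rPQ (t + 1) x i) := by
    refine isMaxOn_iff.2 fun r _ => ?_
    have hr := isMaxOn_iff.1 (hrmax t ht x i) r (Set.mem_univ _)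
    have hstep : b t i (rPQ t x i) * ((rPQ t x i) * Q i
        - (VPQ (t + 1) x - VPQ (t + 1) (x + 1)))
        ≤ b t i (rPQ (t + 1) x i) * ((rPQ (t + 1) x i) * Q i
        - (VPQ (t + 1) x - VPQ (t + 1) (x + 1))) := by nlinarith [M2, heq]
    exact le_trans hr hstep
  exact absurd (hrgreatest t ht x i (rPQ (t + 1) x i) hmax2) (not_le.2 hcon)
end

section
/- Property (1) of the optimal value function (monotonicity in time): For every t ∈ {0,…,T−1} and every x ∈ ℕ^m, V_t(x) ≥ V_{t+1}(x). -/
open MeasureTheory ProbabilityTheory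

/-- Property (1) of the optimal value function of the general model
(monotonicity in time): for every `t ∈ {0,…,T-1}` and every state
`x ∈ ℕ^m`, `V t x ≥ V (t+1) x`. -/
theorem stmt_10
    {Ω : Type*} [MeasurableSpace Ω] (μ : Measure Ω) [IsProbabilityMeasure μ]
    (T m : ℕ) (hT : 1 ≤ T) (hm : 1 ≤ m)
    -- arrival probabilities
    (marr : ℕ → Fin m → ℝ) (hmarr : ∀ t i, 0 ≤ marr t i)
    (hmsum : ∀ t, t < T → ∑ i, marr t i ≤ 1)
    -- reservation-price distribution functions
    (F : ℕ → Fin m → ℝ → ℝ) (hFmono : ∀ t i, Monotone (F t i))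
    (hF0 : ∀ t i r, 0 ≤ F t i r) (hF1 : ∀ t i r, F t i r ≤ 1)
    (b : ℕ → Fin m → ℝ → ℝ) (hb : ∀ t i r, b t i r = marr t i * (1 - F t i r))
    -- expected chargeable weights
    (Q : Fin m → ℝ) (hQ : ∀ i, 0 < Q i)
    -- penalty functions and capacities
    (hw hv : ℝ → ℝ) (hwmono : Monotone hw) (hvmono : Monotone hv)
    (hwconv : ConvexOn ℝ Set.univ hw) (hvconv : ConvexOn ℝ Set.univ hv)
    (hw0 : hw 0 = 0) (hv0 : hv 0 = 0)
    (Cw Cv : ℝ) (hCw : 0 < Cw) (hCv : 0 < Cv)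
    -- weight-volume pairs, nonnegative, i.i.d. across j for each type i
    (W V : Fin m → ℕ → Ω → ℝ)
    (hWVmeas : ∀ i j, Measurable (fun ω => (W i j ω, V i j ω)))
    (hindep : ∀ i, iIndepFun
      (fun j ω => (W i j ω, V i j ω)) μ)
    (hident : ∀ i j, IdentDistrib (fun ω => (W i j ω, V i j ω))
      (fun ω => (W i 0 ω, V i 0 ω)) μ μ)
    (hWnonneg : ∀ i j ω, 0 ≤ W i j ω) (hVnonneg : ∀ i j ω, 0 ≤ V i j ω)
    -- all penalty expectations are finite
    (hint : ∀ x : Fin m → ℕ, Integrable (fun ω =>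
      hw (max ((∑ i, ∑ j ∈ Finset.range (x i), W i j ω) - Cw) 0) +
      hv (max ((∑ i, ∑ j ∈ Finset.range (x i), V i j ω) - Cv) 0)) μ)
    -- the optimal value function: boundary condition and Bellman equation
    (V0 : ℕ → (Fin m → ℕ) → ℝ)
    (hbdd : ∀ t, t < T → ∀ x : Fin m → ℕ, ∀ i, BddAbove (Set.range fun r : ℝ =>
      b t i r * (r * Q i - (V0 (t + 1) x - V0 (t + 1) (x + Pi.single i 1)))))
    (hboundary : ∀ x : Fin m → ℕ, V0 T x = -∫ ω,
      (hw (max ((∑ i, ∑ j ∈ Finset.range (x i), W i j ω) - Cw) 0) +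
       hv (max ((∑ i, ∑ j ∈ Finset.range (x i), V i j ω) - Cv) 0)) ∂μ)
    (hbellman : ∀ t, t < T → ∀ x : Fin m → ℕ, V0 t x =
      (∑ i, ⨆ r : ℝ, b t i r *
        (r * Q i - (V0 (t + 1) x - V0 (t + 1) (x + Pi.single i 1))))
      + V0 (t + 1) x) :
    ∀ t, t < T → ∀ x : Fin m → ℕ, V0 t x ≥ V0 (t + 1) x := by
  intro t ht x
  rw [hbellman t ht x]
  have h : ∀ i : Fin m, 0 ≤ ⨆ r : ℝ, b t i r *
      (r * Q i - (V0 (t + 1) x - V0 (t + 1) (x + Pi.single i 1))) := by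
    intro i
    set Δ := V0 (t + 1) x - V0 (t + 1) (x + Pi.single i 1)
    have := le_ciSup (hbdd t ht x i) (Δ / Q i)
    have hz : b t i (Δ / Q i) * (Δ / Q i * Q i - Δ) = 0 := by
      rw [div_mul_cancel₀ _ (hQ i).ne', sub_self, mul_zero]
    linarith [this, hz.ge]
  have : 0 ≤ ∑ i, ⨆ r : ℝ, b t i r *
      (r * Q i - (V0 (t + 1) x - V0 (t + 1) (x + Pi.single i 1))) :=
    Finset.sum_nonneg fun i _ => h i
  linarith
end

section
/- Property (2) of the optimal value function (monotonicity in the booking vector): For every t ∈ {0,…,T}, every x ∈ ℕ^m and every type i ∈ {1,…,m}, V_t(x) ≥ V_t(x + e_i). -/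
open MeasureTheory ProbabilityTheory

/-- Property (2) of the optimal value function of the general model
(monotonicity in the booking vector): for every `t ∈ {0,…,T}`, every state
`x ∈ ℕ^m` and every type `i`, `V t x ≥ V t (x + e i)`. -/
theorem stmt_11
    {Ω : Type*} [MeasurableSpace Ω] (μ : Measure Ω) [IsProbabilityMeasure μ]
    (T m : ℕ) (hT : 1 ≤ T) (hm : 1 ≤ m)
    -- arrival probabilities
    (marr : ℕ → Fin m → ℝ) (hmarr : ∀ t i, 0 ≤ marr t i)
    (hmsum : ∀ t, t < T → ∑ i, marr t i ≤ 1)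
    -- reservation-price distribution functions
    (F : ℕ → Fin m → ℝ → ℝ) (hFmono : ∀ t i, Monotone (F t i))
    (hF0 : ∀ t i r, 0 ≤ F t i r) (hF1 : ∀ t i r, F t i r ≤ 1)
    (b : ℕ → Fin m → ℝ → ℝ) (hb : ∀ t i r, b t i r = marr t i * (1 - F t i r))
    -- expected chargeable weights
    (Q : Fin m → ℝ) (hQ : ∀ i, 0 < Q i)
    -- penalty functions and capacities
    (hw hv : ℝ → ℝ) (hwmono : Monotone hw) (hvmono : Monotone hv)
    (hwconv : ConvexOn ℝ Set.univ hw) (hvconv : ConvexOn ℝ Set.univ hv)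
    (hw0 : hw 0 = 0) (hv0 : hv 0 = 0)
    (Cw Cv : ℝ) (hCw : 0 < Cw) (hCv : 0 < Cv)
    -- weight-volume pairs, nonnegative, i.i.d. across j for each type i
    (W V : Fin m → ℕ → Ω → ℝ)
    (hWVmeas : ∀ i j, Measurable (fun ω => (W i j ω, V i j ω)))
    (hindep : ∀ i, iIndepFun
      (fun j ω => (W i j ω, V i j ω)) μ)
    (hident : ∀ i j, IdentDistrib (fun ω => (W i j ω, V i j ω))
      (fun ω => (W i 0 ω, V i 0 ω)) μ μ)
    (hWnonneg : ∀ i j ω, 0 ≤ W i j ω) (hVnonneg : ∀ i j ω, 0 ≤ V i j ω)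
    -- all penalty expectations are finite
    (hint : ∀ x : Fin m → ℕ, Integrable (fun ω =>
      hw (max ((∑ i, ∑ j ∈ Finset.range (x i), W i j ω) - Cw) 0) +
      hv (max ((∑ i, ∑ j ∈ Finset.range (x i), V i j ω) - Cv) 0)) μ)
    -- the optimal value function: boundary condition and Bellman equation
    (V0 : ℕ → (Fin m → ℕ) → ℝ)
    (hbdd : ∀ t, t < T → ∀ x : Fin m → ℕ, ∀ i, BddAbove (Set.range fun r : ℝ =>
      b t i r * (r * Q i - (V0 (t + 1) x - V0 (t + 1) (x + Pi.single i 1)))))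
    (hboundary : ∀ x : Fin m → ℕ, V0 T x = -∫ ω,
      (hw (max ((∑ i, ∑ j ∈ Finset.range (x i), W i j ω) - Cw) 0) +
       hv (max ((∑ i, ∑ j ∈ Finset.range (x i), V i j ω) - Cv) 0)) ∂μ)
    (hbellman : ∀ t, t < T → ∀ x : Fin m → ℕ, V0 t x =
      (∑ i, ⨆ r : ℝ, b t i r *
        (r * Q i - (V0 (t + 1) x - V0 (t + 1) (x + Pi.single i 1))))
      + V0 (t + 1) x) :
    ∀ t, t ≤ T → ∀ x : Fin m → ℕ, ∀ i : Fin m,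
      V0 t x ≥ V0 t (x + Pi.single i 1) := by

  have base : ∀ x : Fin m → ℕ, ∀ i : Fin m,
      V0 T (x + Pi.single i 1) ≤ V0 T x := by
    intro x i
    rw [hboundary, hboundary, neg_le_neg_iff]
    refine integral_mono (hint x) (hint _) fun ω => ?_
    have key : ∀ (Z : Fin m → ℕ → Ω → ℝ), (∀ k j ω, 0 ≤ Z k j ω) →
        (∑ k, ∑ j ∈ Finset.range (x k), Z k j ω) ≤
        ∑ k, ∑ j ∈ Finset.range ((x + Pi.single i 1 : Fin m → ℕ) k), Z k j ω := by
      intro Z hZ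
      refine Finset.sum_le_sum fun k _ => ?_
      refine Finset.sum_le_sum_of_subset_of_nonneg
        (Finset.range_subset_range.2 ?_) (fun j _ _ => hZ k j ω)
      simp only [Pi.add_apply]
      omega
    exact add_le_add
      (hwmono (max_le_max (sub_le_sub_right (key W hWnonneg) Cw) le_rfl))
      (hvmono (max_le_max (sub_le_sub_right (key V hVnonneg) Cv) le_rfl))
  have main : ∀ d t, t + d = T → ∀ x : Fin m → ℕ, ∀ i : Fin m,
      V0 t x ≥ V0 t (x + Pi.single i 1) := by
    intro d
    induction d with
    | zero =>
      intro t ht x i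
      have : t = T := by omega
      subst this
      exact base x i
    | succ d ih =>
      intro t ht x i
      have htT : t < T := by omega
      have ih' : ∀ y : Fin m → ℕ, ∀ i : Fin m,
          V0 (t + 1) (y + Pi.single i 1) ≤ V0 (t + 1) y :=
        fun y i => ih (t + 1) (by omega) y i
      set D : (Fin m → ℕ) → ℝ :=
        fun y => V0 (t + 1) y - V0 (t + 1) (y + Pi.single i 1) with hD
      have hD0 : ∀ y, 0 ≤ D y := fun y => sub_nonneg.2 (ih' y i)
      have hbnn : ∀ k r, 0 ≤ b t k r := fun k r => by
        rw [hb]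
        exact mul_nonneg (hmarr t k) (by linarith [hF1 t k r])
      have hbm : ∀ k r, b t k r ≤ marr t k := fun k r => by
        rw [hb]
        nlinarith [hF0 t k r, hmarr t k]
      have step : ∀ k : Fin m, (⨆ r : ℝ, b t k r *
          (r * Q k - (V0 (t + 1) (x + Pi.single i 1) -
            V0 (t + 1) (x + Pi.single i 1 + Pi.single k 1)))) ≤
          (⨆ r : ℝ, b t k r *
            (r * Q k - (V0 (t + 1) x - V0 (t + 1) (x + Pi.single k 1)))) +
          marr t k * max (D x - D (x + Pi.single k 1)) 0 := by
        intro k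
        refine ciSup_le fun r => ?_
        have comm : x + Pi.single i 1 + Pi.single k 1
            = x + Pi.single k 1 + Pi.single i 1 := add_right_comm _ _ _
        have expand : r * Q k - (V0 (t + 1) (x + Pi.single i 1) -
            V0 (t + 1) (x + Pi.single k 1 + Pi.single i 1))
            = (r * Q k - (V0 (t + 1) x - V0 (t + 1) (x + Pi.single k 1)))
              + (D x - D (x + Pi.single k 1)) := by
          simp only [hD]; ring
        have hkey : b t k r * (D x - D (x + Pi.single k 1)) ≤
            marr t k * max (D x - D (x + Pi.single k 1)) 0 := by
          rcases le_or_gt 0 (D x - D (x + Pi.single k 1)) with h | h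
          · rw [max_eq_left h]
            exact mul_le_mul_of_nonneg_right (hbm k r) h
          · rw [max_eq_right h.le]
            simpa using mul_nonpos_of_nonneg_of_nonpos (hbnn k r) h.le
        have hf : b t k r *
            (r * Q k - (V0 (t + 1) x - V0 (t + 1) (x + Pi.single k 1))) ≤
            ⨆ r : ℝ, b t k r *
              (r * Q k - (V0 (t + 1) x - V0 (t + 1) (x + Pi.single k 1))) :=
          le_ciSup (hbdd t htT x k) r
        rw [comm, expand, mul_add]
        linarith
      have hsumc : (∑ k, marr t k * max (D x - D (x + Pi.single k 1)) 0) ≤ D x := by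
        calc (∑ k, marr t k * max (D x - D (x + Pi.single k 1)) 0)
            ≤ ∑ k, marr t k * D x := by
              refine Finset.sum_le_sum fun k _ => ?_
              refine mul_le_mul_of_nonneg_left ?_ (hmarr t k)
              exact max_le (by linarith [hD0 (x + Pi.single k 1)]) (hD0 x)
          _ = (∑ k, marr t k) * D x := by rw [Finset.sum_mul]
          _ ≤ 1 * D x := mul_le_mul_of_nonneg_right (hmsum t htT) (hD0 x)
          _ = D x := one_mul _
      rw [ge_iff_le, hbellman t htT, hbellman t htT]
      have h1 : (∑ k, ⨆ r : ℝ, b t k r *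
          (r * Q k - (V0 (t + 1) (x + Pi.single i 1) -
            V0 (t + 1) (x + Pi.single i 1 + Pi.single k 1)))) ≤
          (∑ k, ⨆ r : ℝ, b t k r *
            (r * Q k - (V0 (t + 1) x - V0 (t + 1) (x + Pi.single k 1))))
          + ∑ k, marr t k * max (D x - D (x + Pi.single k 1)) 0 := by
        rw [← Finset.sum_add_distrib]
        exact Finset.sum_le_sum fun k _ => step k
      have hDx : D x = V0 (t + 1) x - V0 (t + 1) (x + Pi.single i 1) := rfl
      linarith
  intro t ht x i
  exact main (T - t) t (by omega) x i
end

section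
/- Proposition 5 (the certainty-equivalent value function is an upper bound): For every t ∈ {0,…,T} and every x ∈ ℕ^m, V̄_t(x) ≥ V_t(x). -/
open MeasureTheory ProbabilityTheory


lemma jensen_aux {Ω : Type*} [MeasurableSpace Ω] (μ : Measure Ω) [IsProbabilityMeasure μ]
    (h : ℝ → ℝ) (hmono : Monotone h) (hconv : ConvexOn ℝ Set.univ h)
    (C : ℝ) (X : Ω → ℝ) (hXi : Integrable X μ)
    (hgi : Integrable (fun ω => h (max (X ω - C) 0)) μ) :
    h (max ((∫ ω, X ω ∂μ) - C) 0) ≤ ∫ ω, h (max (X ω - C) 0) ∂μ := by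
  have h1 : ConvexOn ℝ Set.univ (fun z : ℝ => z - C) :=
    (convexOn_id convex_univ).sub (concaveOn_const C convex_univ)
  have hfconv : ConvexOn ℝ Set.univ (fun z : ℝ => max (z - C) 0) := by
    have h2 := h1.sup (convexOn_const (0:ℝ) convex_univ)
    simpa [Pi.sup_def] using h2
  have hgconv : ConvexOn ℝ Set.univ (fun z => h (max (z - C) 0)) :=
    ⟨convex_univ, fun x hx y hy a b ha hb hab =>
      le_trans (hmono (hfconv.2 hx hy ha hb hab))
        (hconv.2 (Set.mem_univ _) (Set.mem_univ _) ha hb hab)⟩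
  have hgcont : ContinuousOn (fun z => h (max (z - C) 0)) Set.univ :=
    hgconv.continuousOn isOpen_univ
  exact hgconv.map_integral_le hgcont isClosed_univ
    (Filter.Eventually.of_forall fun _ => Set.mem_univ _) hXi hgi

/-- Proposition 5 (the certainty-equivalent value function is an upper bound):
if `Vbar` satisfies the same Bellman equation as the optimal value function
`V` of the general model, but with the certainty-equivalent boundary
condition (random weights and volumes replaced by their expectations), then
for every `t ∈ {0,…,T}` and every state `x ∈ ℕ^m`, `Vbar t x ≥ V t x`. -/
theorem stmt_12
    {Ω : Type*} [MeasurableSpace Ω] (μ : Measure Ω) [IsProbabilityMeasure μ]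
    (T m : ℕ) (hT : 1 ≤ T) (hm : 1 ≤ m)
    -- arrival probabilities
    (marr : ℕ → Fin m → ℝ) (hmarr : ∀ t i, 0 ≤ marr t i)
    (hmsum : ∀ t, t < T → ∑ i, marr t i ≤ 1)
    -- reservation-price distribution functions
    (F : ℕ → Fin m → ℝ → ℝ) (hFmono : ∀ t i, Monotone (F t i))
    (hF0 : ∀ t i r, 0 ≤ F t i r) (hF1 : ∀ t i r, F t i r ≤ 1)
    (b : ℕ → Fin m → ℝ → ℝ) (hb : ∀ t i r, b t i r = marr t i * (1 - F t i r))
    -- expected chargeable weights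
    (Q : Fin m → ℝ) (hQ : ∀ i, 0 < Q i)
    -- penalty functions and capacities
    (hw hv : ℝ → ℝ) (hwmono : Monotone hw) (hvmono : Monotone hv)
    (hwconv : ConvexOn ℝ Set.univ hw) (hvconv : ConvexOn ℝ Set.univ hv)
    (hw0 : hw 0 = 0) (hv0 : hv 0 = 0)
    (Cw Cv : ℝ) (hCw : 0 < Cw) (hCv : 0 < Cv)
    -- weight-volume pairs, nonnegative, i.i.d. across j for each type i
    (W V : Fin m → ℕ → Ω → ℝ)
    (hWVmeas : ∀ i j, Measurable (fun ω => (W i j ω, V i j ω)))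
    (hindep : ∀ i, iIndepFun
      (fun j ω => (W i j ω, V i j ω)) μ)
    (hident : ∀ i j, IdentDistrib (fun ω => (W i j ω, V i j ω))
      (fun ω => (W i 0 ω, V i 0 ω)) μ μ)
    (hWnonneg : ∀ i j ω, 0 ≤ W i j ω) (hVnonneg : ∀ i j ω, 0 ≤ V i j ω)
    -- all penalty expectations are finite
    (hint : ∀ x : Fin m → ℕ, Integrable (fun ω =>
      hw (max ((∑ i, ∑ j ∈ Finset.range (x i), W i j ω) - Cw) 0) +
      hv (max ((∑ i, ∑ j ∈ Finset.range (x i), V i j ω) - Cv) 0)) μ)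
    -- the optimal value function: boundary condition and Bellman equation
    (V0 : ℕ → (Fin m → ℕ) → ℝ)
    (hbdd : ∀ t, t < T → ∀ x : Fin m → ℕ, ∀ i, BddAbove (Set.range fun r : ℝ =>
      b t i r * (r * Q i - (V0 (t + 1) x - V0 (t + 1) (x + Pi.single i 1)))))
    (hboundary : ∀ x : Fin m → ℕ, V0 T x = -∫ ω,
      (hw (max ((∑ i, ∑ j ∈ Finset.range (x i), W i j ω) - Cw) 0) +
       hv (max ((∑ i, ∑ j ∈ Finset.range (x i), V i j ω) - Cv) 0)) ∂μ)
    (hbellman : ∀ t, t < T → ∀ x : Fin m → ℕ, V0 t x =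
      (∑ i, ⨆ r : ℝ, b t i r *
        (r * Q i - (V0 (t + 1) x - V0 (t + 1) (x + Pi.single i 1))))
      + V0 (t + 1) x)
    -- weights and volumes are integrable
    (hWint : ∀ i j, Integrable (W i j) μ) (hVint : ∀ i j, Integrable (V i j) μ)
    -- the certainty-equivalent value function
    (Vbar : ℕ → (Fin m → ℕ) → ℝ)
    (hbddCE : ∀ t, t < T → ∀ x : Fin m → ℕ, ∀ i,
      BddAbove (Set.range fun r : ℝ => b t i r *
        (r * Q i - (Vbar (t + 1) x - Vbar (t + 1) (x + Pi.single i 1)))))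
    (hboundaryCE : ∀ x : Fin m → ℕ, Vbar T x =
      -hw (max ((∑ i, ∑ j ∈ Finset.range (x i), ∫ ω, W i j ω ∂μ) - Cw) 0)
      - hv (max ((∑ i, ∑ j ∈ Finset.range (x i), ∫ ω, V i j ω ∂μ) - Cv) 0))
    (hbellmanCE : ∀ t, t < T → ∀ x : Fin m → ℕ, Vbar t x =
      (∑ i, ⨆ r : ℝ, b t i r *
        (r * Q i - (Vbar (t + 1) x - Vbar (t + 1) (x + Pi.single i 1))))
      + Vbar (t + 1) x) :
    ∀ t, t ≤ T → ∀ x : Fin m → ℕ, Vbar t x ≥ V0 t x := by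
  -- Base case at time T, for a fixed x
  have base : ∀ x : Fin m → ℕ, V0 T x ≤ Vbar T x := by
    intro x
    rw [hboundary x, hboundaryCE x]
    set Xw : Ω → ℝ := fun ω => ∑ i, ∑ j ∈ Finset.range (x i), W i j ω with hXw
    set Xv : Ω → ℝ := fun ω => ∑ i, ∑ j ∈ Finset.range (x i), V i j ω with hXv
    have hWm : ∀ i j, Measurable (W i j) := fun i j => (hWVmeas i j).fst
    have hVm : ∀ i j, Measurable (V i j) := fun i j => (hWVmeas i j).snd
    have hXwm : Measurable Xw := by
      apply Finset.measurable_sum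
      intro i _
      exact Finset.measurable_sum _ fun j _ => hWm i j
    have hXvm : Measurable Xv := by
      apply Finset.measurable_sum
      intro i _
      exact Finset.measurable_sum _ fun j _ => hVm i j
    have hXwi : Integrable Xw μ :=
      integrable_finset_sum _ fun i _ => integrable_finset_sum _ fun j _ => hWint i j
    have hXvi : Integrable Xv μ :=
      integrable_finset_sum _ fun i _ => integrable_finset_sum _ fun j _ => hVint i j
    have hintXw : ∫ ω, Xw ω ∂μ = ∑ i, ∑ j ∈ Finset.range (x i), ∫ ω, W i j ω ∂μ := by
      rw [hXw, integral_finset_sum _ fun i _ =>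
        integrable_finset_sum _ fun j _ => hWint i j]
      exact Finset.sum_congr rfl fun i _ =>
        integral_finset_sum _ fun j _ => hWint i j
    have hintXv : ∫ ω, Xv ω ∂μ = ∑ i, ∑ j ∈ Finset.range (x i), ∫ ω, V i j ω ∂μ := by
      rw [hXv, integral_finset_sum _ fun i _ =>
        integrable_finset_sum _ fun j _ => hVint i j]
      exact Finset.sum_congr rfl fun i _ =>
        integral_finset_sum _ fun j _ => hVint i j
    -- nonnegativity of the penalty terms
    have hwn : ∀ z : ℝ, 0 ≤ hw (max (z - Cw) 0) := fun z => by
      have := hwmono (le_max_right (z - Cw) 0)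
      rwa [hw0] at this
    have hvn : ∀ z : ℝ, 0 ≤ hv (max (z - Cv) 0) := fun z => by
      have := hvmono (le_max_right (z - Cv) 0)
      rwa [hv0] at this
    -- continuity/measurability of the composed penalties
    have hwcont : Continuous hw := by
      have := hwconv.continuousOn isOpen_univ
      exact continuousOn_univ.mp this
    have hvcont : Continuous hv := by
      have := hvconv.continuousOn isOpen_univ
      exact continuousOn_univ.mp this
    have hgwm : Measurable (fun ω => hw (max (Xw ω - Cw) 0)) :=
      hwcont.measurable.comp ((hXwm.sub measurable_const).max measurable_const)
    have hgvm : Measurable (fun ω => hv (max (Xv ω - Cv) 0)) :=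
      hvcont.measurable.comp ((hXvm.sub measurable_const).max measurable_const)
    have hgwi : Integrable (fun ω => hw (max (Xw ω - Cw) 0)) μ := by
      refine (hint x).mono' hgwm.aestronglyMeasurable ?_
      filter_upwards with ω
      rw [Real.norm_eq_abs, abs_of_nonneg (hwn _)]
      have := hvn (Xv ω)
      linarith
    have hgvi : Integrable (fun ω => hv (max (Xv ω - Cv) 0)) μ := by
      refine (hint x).mono' hgvm.aestronglyMeasurable ?_
      filter_upwards with ω
      rw [Real.norm_eq_abs, abs_of_nonneg (hvn _)]
      have := hwn (Xw ω)
      linarith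
    have jw := jensen_aux μ hw hwmono hwconv Cw Xw hXwi hgwi
    have jv := jensen_aux μ hv hvmono hvconv Cv Xv hXvi hgvi
    rw [hintXw] at jw
    rw [hintXv] at jv
    have hsplit : ∫ ω, (hw (max (Xw ω - Cw) 0) + hv (max (Xv ω - Cv) 0)) ∂μ =
        (∫ ω, hw (max (Xw ω - Cw) 0) ∂μ) + ∫ ω, hv (max (Xv ω - Cv) 0) ∂μ :=
      integral_add hgwi hgvi
    have : ∫ ω, (hw (max ((∑ i, ∑ j ∈ Finset.range (x i), W i j ω) - Cw) 0) +
        hv (max ((∑ i, ∑ j ∈ Finset.range (x i), V i j ω) - Cv) 0)) ∂μ =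
        (∫ ω, hw (max (Xw ω - Cw) 0) ∂μ) + ∫ ω, hv (max (Xv ω - Cv) 0) ∂μ := hsplit
    rw [this]
    linarith
  -- Backwards induction
  have key : ∀ d, ∀ x : Fin m → ℕ, V0 (T - d) x ≤ Vbar (T - d) x := by
    intro d
    induction d with
    | zero => simpa using base
    | succ d ih =>
      by_cases hd : d < T
      · set t := T - (d + 1) with htdef
        have ht : t < T := by omega
        have ht1 : t + 1 = T - d := by omega
        have IH : ∀ x : Fin m → ℕ, V0 (t + 1) x ≤ Vbar (t + 1) x := by
          rw [ht1]; exact ih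
        intro x
        rw [hbellman t ht x, hbellmanCE t ht x]
        set a : ℝ := Vbar (t + 1) x - V0 (t + 1) x with hadef
        have ha : 0 ≤ a := by have := IH x; linarith
        have hsup : ∀ i : Fin m,
            (⨆ r : ℝ, b t i r *
              (r * Q i - (V0 (t + 1) x - V0 (t + 1) (x + Pi.single i 1)))) ≤
            (⨆ r : ℝ, b t i r *
              (r * Q i - (Vbar (t + 1) x - Vbar (t + 1) (x + Pi.single i 1))))
              + marr t i * a := by
          intro i
          apply ciSup_le
          intro r
          have hble : b t i r ≤ marr t i := by
            rw [hb]
            nlinarith [hF0 t i r, hmarr t i]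
          have hbnn : 0 ≤ b t i r := by
            rw [hb]
            have := hF1 t i r
            nlinarith [hmarr t i]
          have ha' : 0 ≤ Vbar (t + 1) (x + Pi.single i 1) - V0 (t + 1) (x + Pi.single i 1) := by
            have := IH (x + Pi.single i 1); linarith
          have hstep : b t i r *
              (r * Q i - (V0 (t + 1) x - V0 (t + 1) (x + Pi.single i 1))) ≤
              b t i r *
              (r * Q i - (Vbar (t + 1) x - Vbar (t + 1) (x + Pi.single i 1)))
              + marr t i * a := by
            have h1 : b t i r *
                (r * Q i - (V0 (t + 1) x - V0 (t + 1) (x + Pi.single i 1))) -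
                b t i r *
                (r * Q i - (Vbar (t + 1) x - Vbar (t + 1) (x + Pi.single i 1))) =
                b t i r * (a - (Vbar (t + 1) (x + Pi.single i 1)
                  - V0 (t + 1) (x + Pi.single i 1))) := by
              rw [hadef]; ring
            nlinarith [mul_nonneg hbnn ha', mul_le_mul_of_nonneg_right hble ha]
          refine hstep.trans (add_le_add_left ?_ _)
          exact le_ciSup (hbddCE t ht x i) r
        calc (∑ i, ⨆ r : ℝ, b t i r *
              (r * Q i - (V0 (t + 1) x - V0 (t + 1) (x + Pi.single i 1))))
              + V0 (t + 1) x
            ≤ (∑ i, ((⨆ r : ℝ, b t i r *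
              (r * Q i - (Vbar (t + 1) x - Vbar (t + 1) (x + Pi.single i 1))))
              + marr t i * a)) + V0 (t + 1) x := by
              gcongr with i _
              · exact hsup i
          _ ≤ (∑ i, ⨆ r : ℝ, b t i r *
              (r * Q i - (Vbar (t + 1) x - Vbar (t + 1) (x + Pi.single i 1))))
              + Vbar (t + 1) x := by
              rw [Finset.sum_add_distrib, ← Finset.sum_mul]
              have hms : ∑ i, marr t i ≤ 1 := hmsum t ht
              have : (∑ i, marr t i) * a ≤ a := by nlinarith
              have hVx : V0 (t + 1) x = Vbar (t + 1) x - a := by rw [hadef]; ring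
              linarith
      · have heq : T - (d + 1) = T - d := by omega
        rw [heq]
        exact ih
  intro t htle x
  have heq : T - (T - t) = t := by omega
  have := key (T - t) x
  rw [heq] at this
  exact this
end

section
/- Theorem 2 (upper bound on the optimality gap of the certainty-equivalent pricing strategy under linear penalties): For every t ∈ {0,…,T} and every x ∈ ℕ^m with ‖x‖₁ ≤ x_max, the gap D_t(x) := V̄_t(x) − J_t(x) satisfies D_t(x) ≤ max over all y ∈ ℕ^m with ‖y‖₁ ≤ x_max of M(y), where M(y) = (h_w/2)·(√(σ_W²(y) + (C_w − w̄(y))²) − |C_w − w̄(y)|) + (h_v/2)·(√(σ_V²(y) + (C_v − v̄(y))²) − |C_v − v̄(y)|). -/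
open MeasureTheory ProbabilityTheory

private lemma max_zero_eq' (a : ℝ) : max a 0 = (a + |a|)/2 := by
  rcases le_total a 0 with h|h
  · rw [max_eq_right h, abs_of_nonpos h]; ring
  · rw [max_eq_left h, abs_of_nonneg h]; ring

private lemma gap_bound' {Ω : Type*} [MeasurableSpace Ω] (μ : Measure Ω) [IsProbabilityMeasure μ]
    (X : Ω → ℝ) (hX : MemLp X 2 μ) (C : ℝ) :
    (∫ ω, max (X ω - C) 0 ∂μ) - max ((∫ ω, X ω ∂μ) - C) 0 ≤
      (Real.sqrt (variance X μ + (C - ∫ ω, X ω ∂μ)^2) - |C - ∫ ω, X ω ∂μ|) / 2 := by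
  have hXi : Integrable X μ := hX.integrable one_le_two
  have hY : MemLp (fun ω => X ω - C) 2 μ := hX.sub (memLp_const C)
  have hYi : Integrable (fun ω => X ω - C) μ := hY.integrable one_le_two
  have hAi : Integrable (fun ω => |X ω - C|) μ := hYi.abs
  set EX := ∫ ω, X ω ∂μ with hEX
  have hEY : (∫ ω, (X ω - C) ∂μ) = EX - C := by
    rw [integral_sub hXi (integrable_const C), integral_const]; simp [hEX]
  set A := ∫ ω, |X ω - C| ∂μ with hA
  have hA0 : 0 ≤ A := integral_nonneg fun ω => abs_nonneg _
  have h1 : (∫ ω, max (X ω - C) 0 ∂μ) = ((EX - C) + A)/2 := by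
    have he : (fun ω => max (X ω - C) 0) = fun ω => ((X ω - C) + |X ω - C|)/2 := by
      funext ω; exact max_zero_eq' _
    rw [he, integral_div, integral_add hYi hAi, hEY]
  have hAbs2 : MemLp (fun ω => |X ω - C|) 2 μ := hY.abs
  have hvarabs := variance_nonneg (fun ω => |X ω - C|) μ
  have hvdef := variance_eq_sub hAbs2
  have hsq : (∫ ω, |X ω - C|^2 ∂μ) = ∫ ω, (X ω - C)^2 ∂μ := by
    simp [sq_abs]
  have hA2 : A^2 ≤ ∫ ω, (X ω - C)^2 ∂μ := by
    simp only [Pi.pow_apply] at hvdef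
    rw [hvdef, hsq] at hvarabs
    rw [hA]; linarith [hvarabs]
  have hvX := variance_eq_sub hX
  have hXsqi : Integrable (fun ω => X ω ^ 2) μ := hX.integrable_sq
  have hexp : (∫ ω, (X ω - C)^2 ∂μ) = variance X μ + (EX - C)^2 := by
    have h2 : (∫ ω, (X ω - C)^2 ∂μ) = ∫ ω, (X ω^2 - 2*C*X ω + C^2) ∂μ := by
      congr 1; funext ω; ring
    have hi1 : Integrable (fun ω => X ω ^ 2 - 2*C*X ω) μ := hXsqi.sub (hXi.const_mul (2*C))
    rw [h2, integral_add hi1 (integrable_const _),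
      integral_sub hXsqi (hXi.const_mul (2*C)), integral_const_mul, integral_const]
    simp only [Pi.pow_apply] at hvX
    simp only [measure_univ, probReal_univ, ENNReal.toReal_one, smul_eq_mul, one_mul, mul_one]
    rw [hvX, ← hEX]; ring
  have hAle : A ≤ Real.sqrt (variance X μ + (C - EX)^2) := by
    have h3 : A^2 ≤ variance X μ + (C - EX)^2 := by
      rw [show (C - EX)^2 = (EX - C)^2 by ring]; linarith [hA2, hexp.le, hexp.ge]
    calc A = Real.sqrt (A^2) := (Real.sqrt_sq hA0).symm
      _ ≤ _ := Real.sqrt_le_sqrt h3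
  have h4 : max (EX - C) 0 = ((EX - C) + |C - EX|)/2 := by
    rw [max_zero_eq', abs_sub_comm]
  rw [h1, h4]
  linarith [hAle]

/-- Theorem 2 (upper bound on the optimality gap of the certainty-equivalent
pricing strategy under linear penalties): with linear penalties
`h_w(z) = hw·z`, `h_v(z) = hv·z`, states `x ∈ ℕ^m` with `‖x‖₁ ≤ xmax`, given
prices `rbar` such that no booking is accepted at full capacity, and `Vbar`,
`J` both satisfying the corresponding recursion with the certainty-equivalent
resp. true (expected) boundary penalties, the gap `D t x = Vbar t x - J t x`
satisfies `D t x ≤ max_{‖y‖₁ ≤ xmax} M y`, where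
`M y = (hw/2)·(√(σW²(y) + (Cw - w̄(y))²) - |Cw - w̄(y)|)
     + (hv/2)·(√(σV²(y) + (Cv - v̄(y))²) - |Cv - v̄(y)|)`. -/
theorem stmt_14
    {Ω : Type*} [MeasurableSpace Ω] (μ : Measure Ω) [IsProbabilityMeasure μ]
    (T m xmax : ℕ) (hT : 1 ≤ T) (hm : 1 ≤ m) (hxmax : 1 ≤ xmax)
    -- arrival probabilities
    (marr : ℕ → Fin m → ℝ) (hmarr : ∀ t i, 0 ≤ marr t i)
    (hmsum : ∀ t, t < T → ∑ i, marr t i ≤ 1)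
    -- reservation-price distribution functions
    (F : ℕ → Fin m → ℝ → ℝ) (hFmono : ∀ t i, Monotone (F t i))
    (hF0 : ∀ t i r, 0 ≤ F t i r) (hF1 : ∀ t i r, F t i r ≤ 1)
    (b : ℕ → Fin m → ℝ → ℝ) (hb : ∀ t i r, b t i r = marr t i * (1 - F t i r))
    -- expected chargeable weights
    (Q : Fin m → ℝ) (hQ : ∀ i, 0 < Q i)
    -- linear penalty rates and capacities
    (hw hv : ℝ) (hhw : 0 ≤ hw) (hhv : 0 ≤ hv)
    (Cw Cv : ℝ) (hCw : 0 < Cw) (hCv : 0 < Cv)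
    -- weight-volume pairs with finite means and variances,
    -- i.i.d. across j and independent across all i and j
    (W V : Fin m → ℕ → Ω → ℝ)
    (hWVmeas : ∀ i j, Measurable (fun ω => (W i j ω, V i j ω)))
    (hindep : iIndepFun
      (fun p : Fin m × ℕ => fun ω => (W p.1 p.2 ω, V p.1 p.2 ω)) μ)
    (hident : ∀ i j, IdentDistrib (fun ω => (W i j ω, V i j ω))
      (fun ω => (W i 0 ω, V i 0 ω)) μ μ)
    (hWL2 : ∀ i j, MemLp (W i j) 2 μ) (hVL2 : ∀ i j, MemLp (V i j) 2 μ)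
    -- means and variances of the accumulated weight and volume
    (wbar vbar σW σV : (Fin m → ℕ) → ℝ)
    (hwbar : ∀ x, wbar x = ∫ ω, ∑ i, ∑ j ∈ Finset.range (x i), W i j ω ∂μ)
    (hvbar : ∀ x, vbar x = ∫ ω, ∑ i, ∑ j ∈ Finset.range (x i), V i j ω ∂μ)
    (hσW : ∀ x, σW x =
      variance (fun ω => ∑ i, ∑ j ∈ Finset.range (x i), W i j ω) μ)
    (hσV : ∀ x, σV x =
      variance (fun ω => ∑ i, ∑ j ∈ Finset.range (x i), V i j ω) μ)
    -- the certainty-equivalent prices; no booking accepted at full capacity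
    (rbar : ℕ → (Fin m → ℕ) → Fin m → ℝ)
    (hfull : ∀ t, t < T → ∀ x : Fin m → ℕ, (∑ i, x i) = xmax →
      ∀ i, b t i (rbar t x i) = 0)
    -- the CE value function and the expected revenue of the CE strategy:
    -- same recursion, different boundary conditions
    (Vbar J : ℕ → (Fin m → ℕ) → ℝ)
    (hrecVbar : ∀ t, t < T → ∀ x : Fin m → ℕ, (∑ i, x i) ≤ xmax →
      Vbar t x = (∑ i, b t i (rbar t x i) * (rbar t x i * Q i -
        (Vbar (t + 1) x - Vbar (t + 1) (x + Pi.single i 1))))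
        + Vbar (t + 1) x)
    (hrecJ : ∀ t, t < T → ∀ x : Fin m → ℕ, (∑ i, x i) ≤ xmax →
      J t x = (∑ i, b t i (rbar t x i) * (rbar t x i * Q i -
        (J (t + 1) x - J (t + 1) (x + Pi.single i 1))))
        + J (t + 1) x)
    (hboundaryVbar : ∀ x : Fin m → ℕ, (∑ i, x i) ≤ xmax →
      Vbar T x = -hw * max (wbar x - Cw) 0 - hv * max (vbar x - Cv) 0)
    (hboundaryJ : ∀ x : Fin m → ℕ, (∑ i, x i) ≤ xmax →
      J T x = -∫ ω,
        (hw * max ((∑ i, ∑ j ∈ Finset.range (x i), W i j ω) - Cw) 0 +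
         hv * max ((∑ i, ∑ j ∈ Finset.range (x i), V i j ω) - Cv) 0) ∂μ)
    -- the bounding function M
    (M : (Fin m → ℕ) → ℝ)
    (hM : ∀ y, M y =
      hw / 2 * (Real.sqrt (σW y + (Cw - wbar y) ^ 2) - |Cw - wbar y|) +
      hv / 2 * (Real.sqrt (σV y + (Cv - vbar y) ^ 2) - |Cv - vbar y|)) :
    ∀ t, t ≤ T → ∀ x : Fin m → ℕ, (∑ i, x i) ≤ xmax →
      Vbar t x - J t x ≤
        sSup {z : ℝ | ∃ y : Fin m → ℕ, (∑ i, y i) ≤ xmax ∧ z = M y} := by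

  set SS := {z : ℝ | ∃ y : Fin m → ℕ, (∑ i, y i) ≤ xmax ∧ z = M y} with hSS
  have hfin : SS.Finite := by
    have hyfin : {y : Fin m → ℕ | (∑ i, y i) ≤ xmax}.Finite := by
      apply Set.Finite.subset (Set.Finite.pi (fun i : Fin m => Set.finite_Iic xmax))
      intro y hy i _
      exact le_trans (Finset.single_le_sum (f := fun j => y j)
        (fun _ _ => Nat.zero_le _) (Finset.mem_univ i)) hy
    apply (hyfin.image M).subset
    rintro z ⟨y, hy, rfl⟩
    exact ⟨y, hy, rfl⟩
  have hmemS : ∀ y : Fin m → ℕ, (∑ i, y i) ≤ xmax → M y ≤ sSup SS := by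
    intro y hy
    exact le_csSup hfin.bddAbove ⟨y, hy, rfl⟩
  have hSWmem : ∀ x : Fin m → ℕ,
      MemLp (fun ω => ∑ i, ∑ j ∈ Finset.range (x i), W i j ω) 2 μ := by
    intro x
    have h := memLp_finset_sum' (μ := μ) Finset.univ
      (f := fun i : Fin m => fun ω => ∑ j ∈ Finset.range (x i), W i j ω) (fun i _ => by
        have h2 := memLp_finset_sum' (μ := μ) (Finset.range (x i))
          (f := fun j => W i j) (fun j _ => hWL2 i j)
        convert h2 using 1
        funext ω; simp)
    convert h using 1
    funext ω; simp
  have hSVmem : ∀ x : Fin m → ℕ,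
      MemLp (fun ω => ∑ i, ∑ j ∈ Finset.range (x i), V i j ω) 2 μ := by
    intro x
    have h := memLp_finset_sum' (μ := μ) Finset.univ
      (f := fun i : Fin m => fun ω => ∑ j ∈ Finset.range (x i), V i j ω) (fun i _ => by
        have h2 := memLp_finset_sum' (μ := μ) (Finset.range (x i))
          (f := fun j => V i j) (fun j _ => hVL2 i j)
        convert h2 using 1
        funext ω; simp)
    convert h using 1
    funext ω; simp
  have hbase : ∀ x : Fin m → ℕ, (∑ i, x i) ≤ xmax → Vbar T x - J T x ≤ M x := by
    intro x hx
    have hW2 := hSWmem x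
    have hV2 := hSVmem x
    have hWi : Integrable (fun ω => ∑ i, ∑ j ∈ Finset.range (x i), W i j ω) μ :=
      hW2.integrable one_le_two
    have hVi : Integrable (fun ω => ∑ i, ∑ j ∈ Finset.range (x i), V i j ω) μ :=
      hV2.integrable one_le_two
    have hWmi : Integrable
        (fun ω => max ((∑ i, ∑ j ∈ Finset.range (x i), W i j ω) - Cw) 0) μ :=
      (hWi.sub (integrable_const Cw)).sup (integrable_const 0)
    have hVmi : Integrable
        (fun ω => max ((∑ i, ∑ j ∈ Finset.range (x i), V i j ω) - Cv) 0) μ :=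
      (hVi.sub (integrable_const Cv)).sup (integrable_const 0)
    have hJT : J T x = -(hw * (∫ ω, max ((∑ i, ∑ j ∈ Finset.range (x i), W i j ω) - Cw) 0 ∂μ)
        + hv * (∫ ω, max ((∑ i, ∑ j ∈ Finset.range (x i), V i j ω) - Cv) 0 ∂μ)) := by
      rw [hboundaryJ x hx, integral_add (hWmi.const_mul hw) (hVmi.const_mul hv),
        integral_const_mul, integral_const_mul]
    have gW := gap_bound' μ _ hW2 Cw
    have gV := gap_bound' μ _ hV2 Cv
    rw [← hwbar x, ← hσW x] at gW
    rw [← hvbar x, ← hσV x] at gV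
    have gW' := mul_le_mul_of_nonneg_left gW hhw
    have gV' := mul_le_mul_of_nonneg_left gV hhv
    rw [hboundaryVbar x hx, hJT, hM x]
    linarith [gW', gV']
  have hstep : ∀ t, t < T →
      (∀ y : Fin m → ℕ, (∑ i, y i) ≤ xmax → Vbar (t+1) y - J (t+1) y ≤ sSup SS) →
      ∀ x : Fin m → ℕ, (∑ i, x i) ≤ xmax → Vbar t x - J t x ≤ sSup SS := by
    intro t ht ih x hx
    have hb0 : ∀ i, 0 ≤ b t i (rbar t x i) := fun i => by
      rw [hb]; exact mul_nonneg (hmarr t i) (by linarith [hF1 t i (rbar t x i)])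
    have hbm : ∀ i, b t i (rbar t x i) ≤ marr t i := fun i => by
      rw [hb]
      nlinarith [hmarr t i, hF0 t i (rbar t x i)]
    have hB1 : (∑ i, b t i (rbar t x i)) ≤ 1 :=
      le_trans (Finset.sum_le_sum (fun i _ => hbm i)) (hmsum t ht)
    have hDx : Vbar (t+1) x - J (t+1) x ≤ sSup SS := ih x hx
    have key : Vbar t x - J t x = (∑ i, b t i (rbar t x i) *
        ((Vbar (t+1) (x + Pi.single i 1) - J (t+1) (x + Pi.single i 1))
          - (Vbar (t+1) x - J (t+1) x)))
        + (Vbar (t+1) x - J (t+1) x) := by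
      rw [hrecVbar t ht x hx, hrecJ t ht x hx]
      have hsum : (∑ i, b t i (rbar t x i) * (rbar t x i * Q i -
            (Vbar (t+1) x - Vbar (t+1) (x + Pi.single i 1))))
          - (∑ i, b t i (rbar t x i) * (rbar t x i * Q i -
            (J (t+1) x - J (t+1) (x + Pi.single i 1))))
          = ∑ i, b t i (rbar t x i) *
            ((Vbar (t+1) (x + Pi.single i 1) - J (t+1) (x + Pi.single i 1))
              - (Vbar (t+1) x - J (t+1) x)) := by
        rw [← Finset.sum_sub_distrib]
        exact Finset.sum_congr rfl fun i _ => by ring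
      linarith [hsum]
    have hterm : ∀ i ∈ Finset.univ, b t i (rbar t x i) *
        ((Vbar (t+1) (x + Pi.single i 1) - J (t+1) (x + Pi.single i 1))
          - (Vbar (t+1) x - J (t+1) x))
        ≤ b t i (rbar t x i) * (sSup SS - (Vbar (t+1) x - J (t+1) x)) := by
      intro i _
      rcases eq_or_lt_of_le hx with heq | hlt
      · rw [hfull t ht x heq i]
        simp
      · have hse : (∑ j, (x + Pi.single i 1 : Fin m → ℕ) j) = (∑ j, x j) + 1 := by
          simp [Finset.sum_add_distrib]
        have hxe : (∑ j, (x + Pi.single i 1 : Fin m → ℕ) j) ≤ xmax := by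
          rw [hse]; omega
        have hDe := ih _ hxe
        exact mul_le_mul_of_nonneg_left (by linarith) (hb0 i)
    have hsum2 := Finset.sum_le_sum hterm
    have h5 : (∑ i, b t i (rbar t x i) * (sSup SS - (Vbar (t+1) x - J (t+1) x)))
        = (∑ i, b t i (rbar t x i)) * (sSup SS - (Vbar (t+1) x - J (t+1) x)) := by
      rw [Finset.sum_mul]
    have h6 : (∑ i, b t i (rbar t x i)) * (sSup SS - (Vbar (t+1) x - J (t+1) x))
        ≤ 1 * (sSup SS - (Vbar (t+1) x - J (t+1) x)) :=
      mul_le_mul_of_nonneg_right hB1 (by linarith)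
    rw [key]
    linarith [hsum2]
  have main : ∀ n : ℕ, ∀ t, t ≤ T → T - t = n → ∀ x : Fin m → ℕ, (∑ i, x i) ≤ xmax →
      Vbar t x - J t x ≤ sSup SS := by
    intro n
    induction n with
    | zero =>
      intro t ht h0 x hx
      have hTt : t = T := by omega
      subst hTt
      exact le_trans (hbase x hx) (hmemS x hx)
    | succ n ihn =>
      intro t ht h0 x hx
      have htT : t < T := by omega
      exact hstep t htT (fun y hy => ihn (t+1) (by omega) (by omega) y hy) x hx
  intro t ht x hx
  exact main (T - t) t ht rfl x hx
end

section
/- For every a ∈ ℝ, E[(X − a)^+] ≤ (√(σ² + (a − μ)²) − (a − μ))/2. -/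
open MeasureTheory ProbabilityTheory

/-- Lemma (Gallego–van Ryzin bound): for a real random variable `X` with finite
mean `μ = E[X]` and finite standard deviation `σ` (i.e. `X ∈ L²`), for every
`a ∈ ℝ`, `E[(X - a)⁺] ≤ (√(σ² + (a - μ)²) - (a - μ)) / 2`. -/
theorem stmt_15 {Ω : Type*} [MeasurableSpace Ω] (P : Measure Ω)
    [IsProbabilityMeasure P] (X : Ω → ℝ) (hX : MemLp X 2 P) (a : ℝ) :
    ∫ ω, max (X ω - a) 0 ∂P ≤
      (Real.sqrt (variance X P + (a - ∫ ω, X ω ∂P) ^ 2) - (a - ∫ ω, X ω ∂P)) / 2 := by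
  set m : ℝ := ∫ ω, X ω ∂P with hm
  have hXint : Integrable X P := hX.integrable one_le_two
  have hY : MemLp (fun ω => X ω - a) 2 P := hX.sub (memLp_const a)
  have hYint : Integrable (fun ω => X ω - a) P := hY.integrable one_le_two
  have habs : Integrable (fun ω => |X ω - a|) P := hYint.abs
  have hIY : ∫ ω, (X ω - a) ∂P = m - a := by
    rw [integral_sub hXint (integrable_const a), integral_const]
    simp [hm]
  have hvarY : variance (fun ω => X ω - a) P = variance X P := by
    rw [variance_eq_integral hX.aemeasurable, variance_eq_integral hY.aemeasurable, hIY]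
    congr 1
    funext ω
    ring
  have hmom : ∫ ω, (X ω - a) ^ 2 ∂P = variance X P + (a - m) ^ 2 := by
    have h1 := variance_eq_sub hY
    rw [hvarY] at h1
    have h2 : (P[(fun ω => X ω - a) ^ 2] : ℝ) = ∫ ω, (X ω - a) ^ 2 ∂P := by
      refine integral_congr_ae (Filter.Eventually.of_forall fun ω => ?_)
      simp
    have h3 : (P[fun ω => X ω - a] : ℝ) = m - a := hIY
    rw [h2, h3] at h1
    have : (m - a) ^ 2 = (a - m) ^ 2 := by ring
    linarith [h1]
  have hmomnonneg : 0 ≤ ∫ ω, (X ω - a) ^ 2 ∂P :=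
    integral_nonneg fun ω => sq_nonneg _
  -- Cauchy–Schwarz: E|Y| ≤ sqrt (E Y²)
  have hCS : ∫ ω, |X ω - a| ∂P ≤ Real.sqrt (∫ ω, (X ω - a) ^ 2 ∂P) := by
    have hpq : (2 : ℝ).HolderConjugate 2 := Real.HolderConjugate.two_two
    have h2 : ENNReal.ofReal (2 : ℝ) = 2 := by norm_num
    have hone : MemLp (fun _ : Ω => (1 : ℝ)) (ENNReal.ofReal (2 : ℝ)) P := by
      rw [h2]; exact memLp_const 1
    have hcs := integral_mul_norm_le_Lp_mul_Lq (μ := P) hpq (f := fun ω => X ω - a)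
      (g := fun _ => (1 : ℝ)) (by rw [h2]; exact hY) hone
    simp only [norm_one, mul_one, Real.norm_eq_abs] at hcs
    have h1 : ∫ ω, |X ω - a| ^ (2 : ℝ) ∂P = ∫ ω, (X ω - a) ^ 2 ∂P := by
      refine integral_congr_ae (Filter.Eventually.of_forall fun ω => ?_)
      simp only [Real.rpow_two, sq_abs]
    have h2' : ∫ ω, (1 : ℝ) ^ (2 : ℝ) ∂P = 1 := by
      simp
    rw [h1, h2'] at hcs
    calc ∫ ω, |X ω - a| ∂P
        ≤ (∫ ω, (X ω - a) ^ 2 ∂P) ^ ((1 : ℝ) / 2) * (1 : ℝ) ^ ((1:ℝ)/2) := hcs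
      _ = Real.sqrt (∫ ω, (X ω - a) ^ 2 ∂P) := by
          rw [Real.one_rpow, mul_one, ← Real.sqrt_eq_rpow]
  -- pointwise: max y 0 = (y + |y|)/2
  have hmax : ∫ ω, max (X ω - a) 0 ∂P = ((m - a) + ∫ ω, |X ω - a| ∂P) / 2 := by
    have hpt : ∀ ω, max (X ω - a) 0 = ((X ω - a) + |X ω - a|) / 2 := fun ω => by
      rcases le_total (X ω - a) 0 with h | h
      · rw [max_eq_right h, abs_of_nonpos h]; ring
      · rw [max_eq_left h, abs_of_nonneg h]; ring
    simp_rw [hpt]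
    rw [integral_div, integral_add hYint habs, hIY]
  rw [hmax]
  rw [hmom] at hCS
  linarith [hCS]
end

section
/- For every a ∈ ℝ, E[(X − a)^+] − (μ − a)^+ ≤ (√(σ² + (a − μ)²) − |a − μ|)/2; that is, the Jensen gap of the function z ↦ (z − a)^+ is bounded by half the difference between √(σ² + (a − μ)²) and |a − μ|. -/
open MeasureTheory ProbabilityTheory

lemma max_zero_eq_half (z : ℝ) : max z 0 = (z + |z|) / 2 := by
  rcases le_total 0 z with h | h
  · rw [max_eq_left h, abs_of_nonneg h]; ring
  · rw [max_eq_right h, abs_of_nonpos h]; ring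

/-- For a real random variable `X` with finite mean `μ = E[X]` and finite
standard deviation `σ` (i.e. `X ∈ L²`), for every `a ∈ ℝ`,
`E[(X - a)⁺] - (μ - a)⁺ ≤ (√(σ² + (a - μ)²) - |a - μ|) / 2`: the Jensen gap of
`z ↦ (z - a)⁺` is bounded by half the difference between `√(σ² + (a - μ)²)`
and `|a - μ|`. -/
theorem stmt_16 {Ω : Type*} [MeasurableSpace Ω] (P : Measure Ω)
    [IsProbabilityMeasure P] (X : Ω → ℝ) (hX : MemLp X 2 P) (a : ℝ) :
    (∫ ω, max (X ω - a) 0 ∂P) - max ((∫ ω, X ω ∂P) - a) 0 ≤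
      (Real.sqrt (variance X P + (a - ∫ ω, X ω ∂P) ^ 2) -
        |a - ∫ ω, X ω ∂P|) / 2 := by
  set m := ∫ ω, X ω ∂P with hm
  have hXi : Integrable X P := hX.integrable one_le_two
  have hXsq : Integrable (fun ω => X ω ^ 2) P := hX.integrable_sq
  have hY : MemLp (fun ω => X ω - a) 2 P := hX.sub (memLp_const a)
  have hYi : Integrable (fun ω => X ω - a) P := hY.integrable one_le_two
  have hYa : MemLp (fun ω => |X ω - a|) 2 P := by
    exact hY.abs
  have hYai : Integrable (fun ω => |X ω - a|) P := hYa.integrable one_le_two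
  have hYsq : Integrable (fun ω => (X ω - a) ^ 2) P := by
    simpa using hY.integrable_sq
  -- mean of Y
  have hmean : (∫ ω, (X ω - a) ∂P) = m - a := by
    rw [integral_sub hXi (integrable_const a), integral_const]
    simp [hm]
  -- second moment of Y
  have hsecond : (∫ ω, (X ω - a) ^ 2 ∂P) = variance X P + (a - m) ^ 2 := by
    rw [variance_eq_sub hX]
    have h1 : (∫ ω, (X ω - a) ^ 2 ∂P)
        = ∫ ω, (X ω ^ 2 - 2 * a * X ω + a ^ 2) ∂P := by
      refine integral_congr_ae (Filter.Eventually.of_forall fun ω => ?_)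
      ring
    have hA : Integrable (fun ω => X ω ^ 2 - 2 * a * X ω) P :=
      hXsq.sub (hXi.const_mul (2 * a))
    rw [h1, integral_add hA (integrable_const _),
      integral_sub hXsq (hXi.const_mul (2 * a)),
      integral_const, integral_const_mul]
    have h2 : P[X ^ 2] = ∫ ω, X ω ^ 2 ∂P := by
      simp [Pi.pow_apply]
    rw [h2]
    simp [hm]
    ring
  -- Cauchy-Schwarz via nonnegativity of the variance of |Y|
  have hCS : (∫ ω, |X ω - a| ∂P) ^ 2 ≤ ∫ ω, (X ω - a) ^ 2 ∂P := by
    have hv := variance_nonneg (fun ω => |X ω - a|) P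
    rw [variance_eq_sub hYa] at hv
    have h3 : P[(fun ω => |X ω - a|) ^ 2] = ∫ ω, (X ω - a) ^ 2 ∂P := by
      refine integral_congr_ae (Filter.Eventually.of_forall fun ω => ?_)
      simp [sq_abs]
    rw [h3] at hv
    linarith
  have habs : (∫ ω, |X ω - a| ∂P) ≤ Real.sqrt (variance X P + (a - m) ^ 2) := by
    rw [Real.le_sqrt (integral_nonneg fun ω => abs_nonneg _)
      (add_nonneg (variance_nonneg _ _) (sq_nonneg _))]
    rw [← hsecond]
    exact hCS
  -- put things together
  have h4 : (∫ ω, max (X ω - a) 0 ∂P)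
      = ((m - a) + ∫ ω, |X ω - a| ∂P) / 2 := by
    have : (∫ ω, max (X ω - a) 0 ∂P)
        = ∫ ω, ((X ω - a) + |X ω - a|) / 2 ∂P := by
      refine integral_congr_ae (Filter.Eventually.of_forall fun ω => ?_)
      exact max_zero_eq_half _
    rw [this, integral_div, integral_add hYi hYai, hmean]
  have h5 : max (m - a) 0 = ((m - a) + |m - a|) / 2 := max_zero_eq_half _
  have h6 : |m - a| = |a - m| := abs_sub_comm _ _
  rw [h4, h5, h6]
  linarith
end
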